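/- arXiv:2506.21637 — 9 statements merged into one kernel-verified Lean document; each statement's English description precedes it below -/
import Mathlib

section
/- Suppose r : ℤ/fℤ → ℤ satisfies −p ≤ r_i ≤ p for all i and p^f − 1 divides Σ_{i=0}^{f−1} p^{f−1−i}·r_i. Then for every i the following local conditions hold: r_i ∈ {−p, −(p−1), −1, 0, 1, p−1, p}; if r_i ∈ {−1, p−1} then r_{i+1} ∈ {p−1, p}; if r_i ∈ {1, −(p−1)} then r_{i+1} ∈ {−(p−1), −p}; and if r_i ∈ {−p, 0, p} then r_{i+1} ∈ {−1, 0, 1}. (These local conditions are equivalent to the assertion that either r is constantly p−1, or constantly −(p−1), or the cyclic list (r_0, …, r_{f−1}) breaks up into strings of the form ±(−1, p−1, …, p−1, p), possibly with no occurrence of p−1, and strings of the form (0, …, 0).) -/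
/-!
Write `S_j = ∑_{i<f} p^{f-1-i} r_{j+i}` for the value of the rotation of `r` starting at `j`.
Rotating by one step gives `p S_j = (p^f - 1) r_j + S_{j+1}`, so `p^f - 1` divides every `S_j`
once it divides `S_0`. The bound `|r_i| ≤ p` gives `|S_j| ≤ p (p^f - 1)/(p - 1) < 2 (p^f - 1)`,
hence `S_j = (p^f - 1) k_j` with carries `k_j ∈ {-1, 0, 1}` and `r_j = p k_j - k_{j+1}`.
The local conditions are then a finite check on consecutive carries.
-/

open Finset

lemma mul_sum_pow_sub_sum_pow_shift {R : Type*} [CommRing R] (p : R) (g : ℕ → R) (n : ℕ) :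
    p * ∑ i ∈ range n, p ^ (n - 1 - i) * g i - ∑ i ∈ range n, p ^ (n - 1 - i) * g (i + 1) =
      p ^ n * g 0 - g n := by
  have htel := sum_range_sub' (fun i => p ^ (n - i) * g i) n
  rw [Nat.sub_zero, Nat.sub_self, pow_zero, one_mul] at htel
  rw [mul_sum, ← sum_sub_distrib, ← htel]
  refine sum_congr rfl fun i hi => ?_
  have hn : n - i = n - 1 - i + 1 := by have := mem_range.1 hi; omega
  rw [hn, pow_succ', mul_assoc, Nat.sub_add_eq, Nat.sub_right_comm]

def rotatedSum {R : Type*} [CommRing R] {f : ℕ} (p : R) (r : ZMod f → R) (j : ZMod f) : R :=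
  ∑ i ∈ range f, p ^ (f - 1 - i) * r (j + i)

section rotatedSum

variable {R : Type*} [CommRing R] {f : ℕ} (p : R) (r : ZMod f → R)

lemma rotatedSum_zero : rotatedSum p r 0 = ∑ i ∈ range f, p ^ (f - 1 - i) * r i := by
  simp only [rotatedSum, zero_add]

lemma mul_rotatedSum (j : ZMod f) :
    p * rotatedSum p r j = (p ^ f - 1) * r j + rotatedSum p r (j + 1) := by
  have h := mul_sum_pow_sub_sum_pow_shift p (fun i => r (j + i)) f
  simp only [Nat.cast_zero, add_zero, ZMod.natCast_self, Nat.cast_succ, ← add_assoc,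
    add_right_comm j _ 1] at h
  rw [rotatedSum, rotatedSum]
  linear_combination h

lemma dvd_rotatedSum [NeZero f] (h : p ^ f - 1 ∣ rotatedSum p r 0) (j : ZMod f) :
    p ^ f - 1 ∣ rotatedSum p r j := by
  rw [← ZMod.natCast_zmod_val j]
  induction j.val with
  | zero => simpa using h
  | succ n ih =>
    have hstep := mul_rotatedSum p r n
    rw [Nat.cast_succ, eq_sub_of_add_eq' hstep.symm]
    exact dvd_sub (dvd_mul_of_dvd_right ih p) (dvd_mul_right _ _)

end rotatedSum

lemma abs_rotatedSum_le {R : Type*} [CommRing R] [LinearOrder R] [IsStrictOrderedRing R]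
    {f : ℕ} {p B : R} (hp : 0 ≤ p) {r : ZMod f → R} (hr : ∀ i, |r i| ≤ B) (j : ZMod f) :
    |rotatedSum p r j| ≤ (∑ i ∈ range f, p ^ i) * B := by
  calc |rotatedSum p r j| ≤ ∑ i ∈ range f, p ^ (f - 1 - i) * B := by
        refine (abs_sum_le_sum_abs _ _).trans (sum_le_sum fun i _ => ?_)
        rw [abs_mul, abs_of_nonneg (pow_nonneg hp _)]
        exact mul_le_mul_of_nonneg_left (hr _) (pow_nonneg hp _)
    _ = (∑ i ∈ range f, p ^ i) * B := by
        rw [← sum_mul, sum_range_reflect (fun i => p ^ i) f]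

lemma exists_carries_of_dvd {f : ℕ} [NeZero f] {p : ℤ} (hp : 3 ≤ p) {r : ZMod f → ℤ}
    (hr : ∀ i, |r i| ≤ p) (hdvd : p ^ f - 1 ∣ rotatedSum p r 0) :
    ∃ k : ZMod f → ℤ, (∀ j, |k j| ≤ 1) ∧ ∀ j, r j = p * k j - k (j + 1) := by
  set q := p ^ f - 1
  have hq : 0 < q := sub_pos.2 (one_lt_pow₀ (by linarith) (NeZero.ne f))
  choose k hk using dvd_rotatedSum p r hdvd
  refine ⟨k, fun j => ?_, fun j => ?_⟩
  · have hS := abs_rotatedSum_le (p := p) (by linarith) hr j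
    rw [hk, abs_mul, abs_of_pos hq] at hS
    have hbd : (p - 1) * |k j| ≤ p := by
      nlinarith [geom_sum_mul p f, abs_nonneg (k j)]
    nlinarith [abs_nonneg (k j)]
  · have h := mul_rotatedSum p r j
    rw [hk, hk] at h
    have h' : q * (p * k j - k (j + 1)) = q * r j := by linear_combination h
    exact (mul_left_cancel₀ hq.ne' h').symm

/-- The local conditions on a pair `(x, y) = (r_i, r_{i+1})` of consecutive digits. -/
def LocalConditions (p x y : ℤ) : Prop :=
  (x = -p ∨ x = -(p - 1) ∨ x = -1 ∨ x = 0 ∨ x = 1 ∨ x = p - 1 ∨ x = p) ∧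
    ((x = -1 ∨ x = p - 1) → (y = p - 1 ∨ y = p)) ∧
    ((x = 1 ∨ x = -(p - 1)) → (y = -(p - 1) ∨ y = -p)) ∧
    ((x = -p ∨ x = 0 ∨ x = p) → (y = -1 ∨ y = 0 ∨ y = 1))

lemma localConditions_of_carries {p a b c : ℤ} (hp : 3 ≤ p)
    (ha : |a| ≤ 1) (hb : |b| ≤ 1) (hc : |c| ≤ 1)
    (hx : |p * a - b| ≤ p) (hy : |p * b - c| ≤ p) :
    LocalConditions p (p * a - b) (p * b - c) := by
  obtain ⟨ha₁, ha₂⟩ := abs_le.1 ha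
  obtain ⟨hb₁, hb₂⟩ := abs_le.1 hb
  obtain ⟨hc₁, hc₂⟩ := abs_le.1 hc
  obtain ⟨hx₁, hx₂⟩ := abs_le.1 hx
  obtain ⟨hy₁, hy₂⟩ := abs_le.1 hy
  clear ha hb hc hx hy
  unfold LocalConditions
  interval_cases a <;> interval_cases b <;> interval_cases c <;> omega

/-- Lemma 3.6 of the paper (Lemma 7.1 of Gee–Liu–Savitt), stated via local conditions:
if `−p ≤ r_i ≤ p` for all `i` and `p^f − 1` divides `Σ_{i=0}^{f−1} p^{f−1−i}·r_i`, then every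
`r_i` lies in `{−p, −(p−1), −1, 0, 1, p−1, p}` and the successor conditions hold. -/
theorem stmt0 (p f : ℕ) (hp : p.Prime) (hodd : Odd p) (hf : 1 ≤ f)
    (r : ZMod f → ℤ)
    (hbd : ∀ i : ZMod f, -(p : ℤ) ≤ r i ∧ r i ≤ (p : ℤ))
    (hdvd : ((p : ℤ) ^ f - 1) ∣
      ∑ i ∈ Finset.range f, (p : ℤ) ^ (f - 1 - i) * r (i : ZMod f)) :
    ∀ i : ZMod f,
      (r i = -(p : ℤ) ∨ r i = -((p : ℤ) - 1) ∨ r i = -1 ∨ r i = 0 ∨ r i = 1 ∨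
        r i = (p : ℤ) - 1 ∨ r i = (p : ℤ)) ∧
      ((r i = -1 ∨ r i = (p : ℤ) - 1) → (r (i + 1) = (p : ℤ) - 1 ∨ r (i + 1) = (p : ℤ))) ∧
      ((r i = 1 ∨ r i = -((p : ℤ) - 1)) →
        (r (i + 1) = -((p : ℤ) - 1) ∨ r (i + 1) = -(p : ℤ))) ∧
      ((r i = -(p : ℤ) ∨ r i = 0 ∨ r i = (p : ℤ)) →
        (r (i + 1) = -1 ∨ r (i + 1) = 0 ∨ r (i + 1) = 1)) := by
  have : NeZero f := ⟨by omega⟩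
  have hp3 : (3 : ℤ) ≤ p := by
    obtain ⟨m, rfl⟩ := hodd
    have := hp.two_le
    omega
  have hr : ∀ i, |r i| ≤ p := fun i => abs_le.2 (hbd i)
  obtain ⟨k, hk_bd, hk⟩ := exists_carries_of_dvd hp3 hr (by rwa [rotatedSum_zero])
  intro i
  have hxy := localConditions_of_carries hp3 (hk_bd i) (hk_bd _) (hk_bd _)
    (hk i ▸ hr i) (hk (i + 1) ▸ hr (i + 1))
  rwa [← hk i, ← hk (i + 1)] at hxy
end

section
/- Suppose r : ℤ/fℤ → ℤ satisfies the local string conditions: r_i ∈ {−p, −(p−1), −1, 0, 1, p−1, p} for all i; if r_i ∈ {−1, p−1} then r_{i+1} ∈ {p−1, p}; if r_i ∈ {1, −(p−1)} then r_{i+1} ∈ {−(p−1), −p}; and if r_i ∈ {−p, 0, p} then r_{i+1} ∈ {−1, 0, 1} (these conditions express that the cyclic list (r_0, …, r_{f−1}) is constantly ±(p−1) or breaks up into strings of the form ±(−1, p−1, …, p−1, p) and strings of the form (0, …, 0)). Then for every i ∈ ℤ/fℤ, the integer Σ_{j=1}^{f} p^{f−j}·r_{i+j} equals p^f − 1 if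 r_{i+1} ∈ {p−1, p}, equals −(p^f − 1) if r_{i+1} ∈ {−(p−1), −p}, and equals 0 otherwise. -/
/-!
Let `c i ∈ {1, -1, 0}` record whether `r (i + 1)` lies in `{p - 1, p}`, in `{-(p - 1), -p}`, or
neither. The local string conditions say exactly that `r (i + 1) = p * c i - c (i + 1)`, so `r` is
the sequence of base-`p` digits produced by the cyclic carries `c`, and the weighted sum
telescopes to `p ^ f * c i - c (i + f) = (p ^ f - 1) * c i`.
-/

open Finset

theorem sum_Icc_pow_mul_eq_of_eq_mul_sub {R : Type*} [CommRing R] {n : ℕ} (q : R)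
    {r c : ZMod n → R} (h : ∀ i, r (i + 1) = q * c i - c (i + 1)) (i : ZMod n) :
    ∑ j ∈ Icc 1 n, q ^ (n - j) * r (i + j) = (q ^ n - 1) * c i := by
  have hterm : ∀ k ∈ range n, q ^ (n - (1 + k)) * r (i + (1 + k : ℕ)) =
      q ^ (n - k) * c (i + k) - q ^ (n - (k + 1)) * c (i + (k + 1 : ℕ)) := by
    intro k hk
    obtain ⟨m, rfl⟩ := Nat.exists_eq_add_of_lt (mem_range.mp hk)
    rw [show k + m + 1 - k = m + 1 by omega, show k + m + 1 - (1 + k) = m by omega,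
      show k + m + 1 - (k + 1) = m by omega, add_comm 1 k, Nat.cast_succ,
      ← add_assoc, h, pow_succ]
    ring
  rw [← Ico_add_one_right_eq_Icc, sum_Ico_eq_sum_range, Nat.add_sub_cancel, sum_congr rfl hterm,
    sum_range_sub', ZMod.natCast_self, Nat.sub_zero, Nat.sub_self, add_zero, Nat.cast_zero,
    add_zero, pow_zero, one_mul, sub_one_mul]

def stringCarry (q x : ℤ) : ℤ :=
  if x = q - 1 ∨ x = q then 1 else if x = -(q - 1) ∨ x = -q then -1 else 0

theorem eq_mul_stringCarry_sub_stringCarry {q x y : ℤ} (hq : 3 ≤ q)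
    (hx : x = -q ∨ x = -(q - 1) ∨ x = -1 ∨ x = 0 ∨ x = 1 ∨ x = q - 1 ∨ x = q)
    (hpos : (x = -1 ∨ x = q - 1) → (y = q - 1 ∨ y = q))
    (hneg : (x = 1 ∨ x = -(q - 1)) → (y = -(q - 1) ∨ y = -q))
    (hzero : (x = -q ∨ x = 0 ∨ x = q) → (y = -1 ∨ y = 0 ∨ y = 1)) :
    x = q * stringCarry q x - stringCarry q y := by
  unfold stringCarry
  split_ifs <;> omega

theorem stmt1_general (p f : ℕ) (hp : p.Prime) (hodd : Odd p)
    (r : ZMod f → ℤ)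
    (hvals : ∀ i : ZMod f,
      r i = -(p : ℤ) ∨ r i = -((p : ℤ) - 1) ∨ r i = -1 ∨ r i = 0 ∨ r i = 1 ∨
        r i = (p : ℤ) - 1 ∨ r i = (p : ℤ))
    (hpos : ∀ i : ZMod f, (r i = -1 ∨ r i = (p : ℤ) - 1) →
      (r (i + 1) = (p : ℤ) - 1 ∨ r (i + 1) = (p : ℤ)))
    (hneg : ∀ i : ZMod f, (r i = 1 ∨ r i = -((p : ℤ) - 1)) →
      (r (i + 1) = -((p : ℤ) - 1) ∨ r (i + 1) = -(p : ℤ)))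
    (hzero : ∀ i : ZMod f, (r i = -(p : ℤ) ∨ r i = 0 ∨ r i = (p : ℤ)) →
      (r (i + 1) = -1 ∨ r (i + 1) = 0 ∨ r (i + 1) = 1)) :
    ∀ i : ZMod f,
      ((r (i + 1) = (p : ℤ) - 1 ∨ r (i + 1) = (p : ℤ)) →
        ∑ j ∈ Finset.Icc 1 f, (p : ℤ) ^ (f - j) * r (i + (j : ZMod f)) = (p : ℤ) ^ f - 1) ∧
      ((r (i + 1) = -((p : ℤ) - 1) ∨ r (i + 1) = -(p : ℤ)) →
        ∑ j ∈ Finset.Icc 1 f, (p : ℤ) ^ (f - j) * r (i + (j : ZMod f)) = -((p : ℤ) ^ f - 1)) ∧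
      ((¬(r (i + 1) = (p : ℤ) - 1 ∨ r (i + 1) = (p : ℤ)) ∧
        ¬(r (i + 1) = -((p : ℤ) - 1) ∨ r (i + 1) = -(p : ℤ))) →
        ∑ j ∈ Finset.Icc 1 f, (p : ℤ) ^ (f - j) * r (i + (j : ZMod f)) = 0) := by
  have hp3 : (3 : ℤ) ≤ p := by
    have := hp.two_le
    have := Nat.odd_iff.mp hodd
    omega
  intro i
  rw [sum_Icc_pow_mul_eq_of_eq_mul_sub (p : ℤ) (c := fun i ↦ stringCarry p (r (i + 1)))
    (fun i ↦ eq_mul_stringCarry_sub_stringCarry hp3 (hvals _) (hpos _) (hneg _) (hzero _)) i]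
  simp only [stringCarry]
  refine ⟨fun h ↦ ?_, fun h ↦ ?_, fun h ↦ ?_⟩
  · rw [if_pos h, mul_one]
  · rw [if_neg (by omega), if_pos h]
    ring
  · rw [if_neg h.1, if_neg h.2, mul_zero]

/-- Lemma A.1 of the paper: if `r : ℤ/fℤ → ℤ` satisfies the local string conditions, then
for every `i`, `Σ_{j=1}^{f} p^{f−j}·r_{i+j}` equals `p^f − 1` if `r_{i+1} ∈ {p−1, p}`,
equals `−(p^f − 1)` if `r_{i+1} ∈ {−(p−1), −p}`, and equals `0` otherwise. -/
theorem stmt1 (p f : ℕ) (hp : p.Prime) (hodd : Odd p) (hf : 1 ≤ f)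
    (r : ZMod f → ℤ)
    (hvals : ∀ i : ZMod f,
      r i = -(p : ℤ) ∨ r i = -((p : ℤ) - 1) ∨ r i = -1 ∨ r i = 0 ∨ r i = 1 ∨
        r i = (p : ℤ) - 1 ∨ r i = (p : ℤ))
    (hpos : ∀ i : ZMod f, (r i = -1 ∨ r i = (p : ℤ) - 1) →
      (r (i + 1) = (p : ℤ) - 1 ∨ r (i + 1) = (p : ℤ)))
    (hneg : ∀ i : ZMod f, (r i = 1 ∨ r i = -((p : ℤ) - 1)) →
      (r (i + 1) = -((p : ℤ) - 1) ∨ r (i + 1) = -(p : ℤ)))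
    (hzero : ∀ i : ZMod f, (r i = -(p : ℤ) ∨ r i = 0 ∨ r i = (p : ℤ)) →
      (r (i + 1) = -1 ∨ r (i + 1) = 0 ∨ r (i + 1) = 1)) :
    ∀ i : ZMod f,
      ((r (i + 1) = (p : ℤ) - 1 ∨ r (i + 1) = (p : ℤ)) →
        ∑ j ∈ Finset.Icc 1 f, (p : ℤ) ^ (f - j) * r (i + (j : ZMod f)) = (p : ℤ) ^ f - 1) ∧
      ((r (i + 1) = -((p : ℤ) - 1) ∨ r (i + 1) = -(p : ℤ)) →
        ∑ j ∈ Finset.Icc 1 f, (p : ℤ) ^ (f - j) * r (i + (j : ZMod f)) = -((p : ℤ) ^ f - 1)) ∧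
      ((¬(r (i + 1) = (p : ℤ) - 1 ∨ r (i + 1) = (p : ℤ)) ∧
        ¬(r (i + 1) = -((p : ℤ) - 1) ∨ r (i + 1) = -(p : ℤ))) →
        ∑ j ∈ Finset.Icc 1 f, (p : ℤ) ^ (f - j) * r (i + (j : ZMod f)) = 0) :=
  stmt1_general p f hp hodd r hvals hpos hneg hzero
end

section
/- For every subset J ⊆ ℤ/fℤ there exist subsets J′, J^Θ and, for each μ ∈ M̃, subsets J^μ of ℤ/fℤ such that: (a) for every i ∉ J₀ one has i ∈ J′ ⟺ i ∈ J, i ∈ J^Θ ⟺ i ∈ J, and i ∈ J^μ ⟺ i ∈ J for all μ ∈ M̃; and (b) the congruences Σ(s(b,J)) ≡ Σ(s(b′,J′)), Σ(t(b,J)) ≡ Σ(t(b′,J′)), Σ(s(b,J)) ≡ Σ(s(b^Θ,J^Θ)), Σ(t(b,J)) ≡ Σ(t(b^Θ,J^Θ)), and for every μ ∈ M̃, Σ(s(b,J)) ≡ Σ(s(b^μ,J^μ)) and Σ(t(b,J)) ≡ Σ(t(b^μ,J^μ)) all hold modulo p^f − 1. -/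
open scoped Classical
noncomputable section

/-- `Σ(v) = Σ_{i=0}^{f−1} v_i · p^{f−1−i}`. -/
def Sig (p f : ℕ) (v : ZMod f → ℤ) : ℤ :=
  ∑ i ∈ Finset.range f, v (i : ZMod f) * (p : ℤ) ^ (f - 1 - i)

/-- `A_i(c,d) = Σ_{j=1}^{f} p^{f−j} · (c_{i+j} − d_{i+j})`. -/
def Ai (p f : ℕ) (c d : ZMod f → ℤ) (i : ZMod f) : ℤ :=
  ∑ j ∈ Finset.Icc 1 f, (p : ℤ) ^ (f - j) * (c (i + (j : ZMod f)) - d (i + (j : ZMod f)))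

/-- `T_ν`: the maximal run of indices with `k`-value 1 following `ν`. -/
def Trun (f : ℕ) (k : ZMod f → ℤ) (ν : ZMod f) : Set (ZMod f) :=
  {i | ∃ s : ℕ, 1 ≤ s ∧ i = ν + (s : ZMod f) ∧
        ∀ j : ℕ, 1 ≤ j → j ≤ s → k (ν + (j : ZMod f)) = 1}

/-- `b_{i,1} = k_i − 1`. -/
def b1 (f : ℕ) (k : ZMod f → ℤ) : ZMod f → ℤ := fun i => k i - 1

/-- the constantly zero second component. -/
def zero2 (f : ℕ) : ZMod f → ℤ := fun _ => 0

/-- `b′_{i,1}`. -/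
def bp1 (p f : ℕ) (k : ZMod f → ℤ) : ZMod f → ℤ := fun i =>
  if k i = 1 then (if k (i + 1) = 1 then (p : ℤ) - 1 else (p : ℤ))
  else (if k (i + 1) = 1 then k i - 2 else k i - 1)

/-- `b^μ_{i,1}`. -/
def bmu1 (p f : ℕ) (k : ZMod f → ℤ) (μ : ZMod f) : ZMod f → ℤ := fun i =>
  if i = μ then k μ - 1 else bp1 p f k i

/-- `b^μ_{i,2}`. -/
def bmu2 (f : ℕ) (μ : ZMod f) : ZMod f → ℤ := fun i => if i = μ then -1 else 0

/-- `b^Θ_{i,1}`. -/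
def bth1 (p f : ℕ) (k : ZMod f → ℤ) : ZMod f → ℤ := fun i =>
  if k i = 1 then (if k (i + 1) = 1 then (p : ℤ) - 1 else (p : ℤ)) else k i - 1

/-- `b^Θ_{i,2}`. -/
def bth2 (f : ℕ) (k : ZMod f → ℤ) : ZMod f → ℤ := fun i =>
  if k i ≠ 1 ∧ k (i + 1) = 1 then -1 else 0

/-- `s_i(c,S) = c_{i,1}` if `i ∈ S`, else `c_{i,2}`. -/
def sW (f : ℕ) (c1 c2 : ZMod f → ℤ) (S : Set (ZMod f)) : ZMod f → ℤ :=
  fun i => if i ∈ S then c1 i else c2 i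

/-- `t_i(c,S) = c_{i,2}` if `i ∈ S`, else `c_{i,1}`. -/
def tW (f : ℕ) (c1 c2 : ZMod f → ℤ) (S : Set (ZMod f)) : ZMod f → ℤ :=
  fun i => if i ∈ S then c2 i else c1 i

/-- The set `𝒫′` of Definition 3.7 of the paper. -/
def memP' (p f : ℕ) (r : ZMod f → ℤ) : Prop :=
  (∀ i, r i = 0 ∨ r i = 1 ∨ r i = (p : ℤ) - 1 ∨ r i = (p : ℤ)) ∧
  (∀ i, r i = (p : ℤ) → (r (i + 1) = 0 ∨ r (i + 1) = 1)) ∧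
  (∀ i, (r i = 1 ∨ r i = (p : ℤ) - 1) → (r (i + 1) = (p : ℤ) - 1 ∨ r (i + 1) = (p : ℤ))) ∧
  (∀ i, r i = 0 →
    ((∀ j, r j = 0) ∨
      ∃ s t : ℕ, 1 ≤ s ∧ 1 ≤ t ∧
        (∀ j : ℕ, 1 ≤ j → j ≤ s - 1 → r (i + (j : ZMod f)) = 0) ∧
        r (i + (s : ZMod f)) = 1 ∧
        (∀ j : ℕ, 1 ≤ j → j ≤ t - 1 → r (i - (j : ZMod f)) = 0) ∧
        r (i - (t : ZMod f)) = (p : ℤ)))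

/-- The exceptional case of Theorem 3.9 of the paper. -/
def Exceptional (p f : ℕ) (r : ZMod f → ℤ) (J : Set (ZMod f)) : Prop :=
  memP' p f r ∧ (∀ i, (r i = (p : ℤ) - 1 ∨ r i = (p : ℤ)) → i ∈ J) ∧
    (∀ i, r i = 1 → i ∉ J)

/-- distance back to the previous index with `k`-value ≠ 1. -/
def nud (f : ℕ) (k : ZMod f → ℤ) (j : ZMod f) : ℕ :=
  if h : ∃ t : ℕ, 0 < t ∧ k (j - (t : ZMod f)) ≠ 1 then Nat.find h else 0

/-- the previous index with `k`-value ≠ 1. -/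
def nu (f : ℕ) (k : ZMod f → ℤ) (j : ZMod f) : ZMod f := j - (nud f k j : ZMod f)

lemma nud_exists (f : ℕ) [NeZero f] (k : ZMod f → ℤ) (hex : ∃ i, k i ≠ 1) (j : ZMod f) :
    ∃ t : ℕ, 0 < t ∧ k (j - (t : ZMod f)) ≠ 1 := by
  obtain ⟨i₀, hi₀⟩ := hex
  rcases eq_or_ne j i₀ with rfl | hne
  · exact ⟨f, Nat.pos_of_ne_zero (NeZero.ne f), by simpa [ZMod.natCast_self] using hi₀⟩
  · refine ⟨(j - i₀).val, ?_, ?_⟩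
    · have : j - i₀ ≠ 0 := sub_ne_zero.mpr hne
      exact Nat.pos_of_ne_zero (fun h => this ((ZMod.val_eq_zero _).mp h))
    · rw [ZMod.natCast_rightInverse (j - i₀)]
      simpa using hi₀

lemma nud_spec (f : ℕ) [NeZero f] (k : ZMod f → ℤ) (hex : ∃ i, k i ≠ 1) (j : ZMod f) :
    0 < nud f k j ∧ k (j - (nud f k j : ZMod f)) ≠ 1 ∧
      ∀ t : ℕ, 0 < t → t < nud f k j → k (j - (t : ZMod f)) = 1 := by
  have h := nud_exists f k hex j
  rw [nud, dif_pos h]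
  refine ⟨(Nat.find_spec h).1, (Nat.find_spec h).2, fun t ht hlt => ?_⟩
  have := Nat.find_min h hlt
  push_neg at this
  exact this ht

lemma k_nu_ne_one (f : ℕ) [NeZero f] (k : ZMod f → ℤ) (hex : ∃ i, k i ≠ 1) (j : ZMod f) :
    k (nu f k j) ≠ 1 := (nud_spec f k hex j).2.1

/-- P3: if `k j ≠ 1` and `k (j+1) = 1` then `nu (j+1) = j`. -/
lemma nu_succ_of_ne (f : ℕ) [NeZero f] (k : ZMod f → ℤ) (hex : ∃ i, k i ≠ 1) (j : ZMod f)
    (hj : k j ≠ 1) : nu f k (j + 1) = j := by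
  have h := nud_exists f k hex (j + 1)
  have h1 : nud f k (j + 1) = 1 := by
    rw [nud, dif_pos h]
    rw [Nat.find_eq_iff h]
    constructor
    · simpa using hj
    · intro n hn
      simp only [not_and_or, not_lt, not_ne_iff]
      left; omega
  rw [nu, h1]
  push_cast
  ring

/-- P2: if `k j = 1` then `nu (j+1) = nu j`. -/
lemma nu_succ_of_eq (f : ℕ) [NeZero f] (k : ZMod f → ℤ) (hex : ∃ i, k i ≠ 1) (j : ZMod f)
    (hj : k j = 1) : nu f k (j + 1) = nu f k j := by
  obtain ⟨hpos, hne, hmin⟩ := nud_spec f k hex j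
  have h := nud_exists f k hex (j + 1)
  have key : ∀ t : ℕ, 1 ≤ t → (j + 1 : ZMod f) - (t : ZMod f) = j - ((t - 1 : ℕ) : ZMod f) := by
    intro t ht
    obtain ⟨s, rfl⟩ := Nat.exists_eq_add_of_le ht
    push_cast
    ring_nf
    simp
  have h1 : nud f k (j + 1) = nud f k j + 1 := by
    rw [nud, dif_pos h, Nat.find_eq_iff h]
    constructor
    · refine ⟨Nat.succ_pos _, ?_⟩
      rw [key _ (by omega)]
      simpa using hne
    · intro t hlt
      simp only [not_and_or, not_lt, not_ne_iff]
      rcases Nat.eq_zero_or_pos t with rfl | htpos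
      · left; omega
      right
      rw [key t htpos]
      rcases Nat.eq_or_lt_of_le htpos with h1 | h2
      · simpa [← h1] using hj
      · exact hmin (t - 1) (by omega) (by omega)
  rw [nu, nu, h1]
  push_cast
  ring

def wgt (p f N : ℕ) (j : ZMod f) : ZMod N := (p : ZMod N) ^ (f - 1 - j.val)

lemma pow_f_eq_one (p f : ℕ) (hp : 0 < p) : ((p : ZMod (p ^ f - 1)) ^ f) = 1 := by
  have h1 : 1 ≤ p ^ f := Nat.one_le_pow _ _ hp
  have : ((p ^ f : ℕ) : ZMod (p ^ f - 1)) = ((p ^ f - 1 : ℕ) : ZMod (p ^ f - 1)) + ((1 : ℕ) : ZMod (p ^ f - 1)) := by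
    rw [← Nat.cast_add]
    congr 1
    omega
  rw [← Nat.cast_pow]
  rw [this, ZMod.natCast_self, zero_add, Nat.cast_one]

lemma wgt_succ (p f N : ℕ) [NeZero f] (hp : 0 < p) (hN : N = p ^ f - 1) (j : ZMod f) :
    (p : ZMod N) * wgt p f N (j + 1) = wgt p f N j := by
  subst hN
  have hjv : j.val < f := ZMod.val_lt j
  have hval : (j + 1).val = (j.val + 1) % f := by
    rw [ZMod.val_add, ZMod.val_one_eq_one_mod]
    conv_rhs => rw [Nat.add_mod]
    rw [Nat.mod_eq_of_lt hjv]
  rcases Nat.lt_or_ge (j.val + 1) f with hlt | hge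
  · rw [wgt, wgt, hval, Nat.mod_eq_of_lt hlt, ← pow_succ']
    congr 1
    omega
  · have hjf : j.val = f - 1 := by omega
    have hv0 : (j + 1).val = 0 := by
      rw [hval, show j.val + 1 = f by omega]; exact Nat.mod_self f
    rw [wgt, wgt, hv0, hjf]
    simp only [Nat.sub_zero, Nat.sub_self, pow_zero]
    rw [← pow_succ']
    have : f - 1 + 1 = f := by have := NeZero.pos f; omega
    rw [this, pow_f_eq_one p f hp]

lemma sig_cast (p f N : ℕ) [NeZero f] (v : ZMod f → ℤ) :
    ((Sig p f v : ℤ) : ZMod N) = ∑ j : ZMod f, (v j : ZMod N) * wgt p f N j := by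
  rw [Sig]
  push_cast
  refine Finset.sum_nbij' (fun i => (i : ZMod f)) (fun j => j.val)
    (fun a _ => Finset.mem_univ _) (fun a _ => Finset.mem_range.mpr (ZMod.val_lt a))
    (fun a ha => ZMod.val_cast_of_lt (Finset.mem_range.mp ha))
    (fun a _ => ZMod.natCast_rightInverse a) (fun a ha => ?_)
  show ((v ((a:ℕ) : ZMod f)) : ZMod N) * (p:ZMod N) ^ (f - 1 - a) = _
  rw [wgt, ZMod.val_cast_of_lt (Finset.mem_range.mp ha)]


lemma main_congr (p f : ℕ) [NeZero f] (hp : 0 < p) (k : ZMod f → ℤ) (hex : ∃ i, k i ≠ 1)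
    (act : ZMod f → Prop) (J S : Set (ZMod f)) (c1 c2 : ZMod f → ℤ)
    (H0 : ∀ j, k j ≠ 1 → k (j + 1) ≠ 1 → c1 j = k j - 1 ∧ c2 j = 0 ∧ (j ∈ S ↔ j ∈ J))
    (H1 : ∀ j, k j ≠ 1 → k (j + 1) = 1 → (j ∈ S ↔ j ∈ J) ∧
        (j ∈ J → c1 j = k j - 1 - (if act j then 1 else 0)) ∧
        (j ∉ J → c2 j = -(if act j then 1 else 0)))
    (H2 : ∀ j, k j = 1 → c1 j = (if k (j + 1) = 1 then (p : ℤ) - 1 else (p : ℤ)) ∧ c2 j = 0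
        ∧ (j ∈ S ↔ act (nu f k j))) :
    Int.ModEq ((p : ℤ) ^ f - 1) (Sig p f (sW f (b1 f k) (zero2 f) J)) (Sig p f (sW f c1 c2 S)) := by
  set N : ℕ := p ^ f - 1 with hNdef
  have h1 : 1 ≤ p ^ f := Nat.one_le_pow _ _ hp
  have hN : ((N : ℕ) : ℤ) = (p : ℤ) ^ f - 1 := by push_cast [hNdef, h1]; ring
  rw [show ((p : ℤ) ^ f - 1) = (N : ℤ) from hN.symm, ← ZMod.intCast_eq_intCast_iff]
  rw [sig_cast, sig_cast]
  set w : ZMod f → ZMod N := wgt p f N with hw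
  have hws : ∀ j : ZMod f, (p : ZMod N) * w (j + 1) = w j := fun j => wgt_succ p f N hp rfl j
  set F : ZMod f → ZMod N :=
    fun j => if k j = 1 ∧ act (nu f k j) then -((p : ZMod N) * w j) else 0 with hF
  have key : ∀ j : ZMod f,
      ((sW f (b1 f k) (zero2 f) J j : ℤ) : ZMod N) * w j - ((sW f c1 c2 S j : ℤ)) * w j
        = F j - F (j + 1) := by
    intro j
    by_cases hkj : k j = 1
    · obtain ⟨hc1, hc2, hS⟩ := H2 j hkj
      have hb : sW f (b1 f k) (zero2 f) J j = 0 := by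
        simp only [sW, b1, zero2, hkj]; split <;> ring
      rw [hb]
      have hFj : F j = if act (nu f k j) then -((p : ZMod N) * w j) else 0 := by
        simp only [hF, hkj, true_and]
      by_cases hk1 : k (j + 1) = 1
      · have hnu : nu f k (j + 1) = nu f k j := nu_succ_of_eq f k hex j hkj
        have hFj1 : F (j + 1) = if act (nu f k j) then -w j else 0 := by
          simp only [hF, hk1, hnu, true_and]
          split <;> simp [hws j]
        rw [hFj, hFj1]
        simp only [sW, hS, hc1, hc2, hk1, if_pos]
        by_cases ha : act (nu f k j) <;> simp only [ha, if_true, if_false] <;> push_cast <;> ring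
      · have hFj1 : F (j + 1) = 0 := by simp only [hF, hk1, false_and, if_false]
        rw [hFj, hFj1]
        simp only [sW, hS, hc1, hc2, if_neg hk1]
        by_cases ha : act (nu f k j) <;> simp only [ha, if_true, if_false] <;> push_cast <;> ring
    · have hFj : F j = 0 := by simp only [hF, hkj, false_and, if_false]
      rw [hFj]
      by_cases hk1 : k (j + 1) = 1
      · obtain ⟨hS, hc1, hc2⟩ := H1 j hkj hk1
        have hnu : nu f k (j + 1) = j := nu_succ_of_ne f k hex j hkj
        have hFj1 : F (j + 1) = if act j then -w j else 0 := by
          simp only [hF, hk1, hnu, true_and]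
          split <;> simp [hws j]
        rw [hFj1]
        by_cases hJ : j ∈ J
        · simp only [sW, b1, zero2, hS, hJ, if_true, hc1 hJ]
          by_cases ha : act j <;> simp only [ha, if_true, if_false] <;> push_cast <;> ring
        · simp only [sW, b1, zero2, hS, hJ, if_false, hc2 hJ]
          by_cases ha : act j <;> simp only [ha, if_true, if_false] <;> push_cast <;> ring
      · obtain ⟨hc1, hc2, hS⟩ := H0 j hkj hk1
        have hFj1 : F (j + 1) = 0 := by simp only [hF, hk1, false_and, if_false]
        rw [hFj1]
        simp only [sW, b1, zero2, hS, hc1, hc2]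
        split <;> ring
  have hsum : ∑ j : ZMod f, (F j - F (j + 1)) = 0 := by
    rw [Finset.sum_sub_distrib]
    rw [Fintype.sum_equiv (Equiv.addRight (1 : ZMod f)) (fun j => F (j + 1)) F (fun j => rfl)]
    ring
  have := Finset.sum_congr rfl (fun j (_ : j ∈ Finset.univ) => key j)
  rw [Finset.sum_sub_distrib] at this
  rw [hsum] at this
  linear_combination this

/-- Proposition 5.6 of the paper (possible regular shape): for every `J` there exist subsets
`J′`, `J^Θ` and `J^μ` (for `μ ∈ M̃`) agreeing with `J` outside `J₀` and giving the congruences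
mod `p^f − 1`. -/
theorem stmt3 (p f : ℕ) (hp : p.Prime) (hodd : Odd p) (hf : 1 ≤ f)
    (k : ZMod f → ℤ)
    (hk : ∀ i, 1 ≤ k i ∧ k i ≤ (p : ℤ))
    (hone : ∃ i, k i = 1) (hnotone : ∃ i, k i ≠ 1)
    (h21 : ∀ i, ¬(k i = 2 ∧ k (i + 1) = 1))
    (J : Set (ZMod f)) :
    ∃ (J' JTh : Set (ZMod f)) (Jmu : ZMod f → Set (ZMod f)),
      (∀ i, k i ≠ 1 →
        ((i ∈ J' ↔ i ∈ J) ∧ (i ∈ JTh ↔ i ∈ J) ∧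
          ∀ μ, (k μ ≠ 1 ∧ k (μ + 1) = 1) → (i ∈ Jmu μ ↔ i ∈ J))) ∧
      Int.ModEq ((p : ℤ) ^ f - 1)
        (Sig p f (sW f (b1 f k) (zero2 f) J)) (Sig p f (sW f (bp1 p f k) (zero2 f) J')) ∧
      Int.ModEq ((p : ℤ) ^ f - 1)
        (Sig p f (tW f (b1 f k) (zero2 f) J)) (Sig p f (tW f (bp1 p f k) (zero2 f) J')) ∧
      Int.ModEq ((p : ℤ) ^ f - 1)
        (Sig p f (sW f (b1 f k) (zero2 f) J))
        (Sig p f (sW f (bth1 p f k) (bth2 f k) JTh)) ∧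
      Int.ModEq ((p : ℤ) ^ f - 1)
        (Sig p f (tW f (b1 f k) (zero2 f) J))
        (Sig p f (tW f (bth1 p f k) (bth2 f k) JTh)) ∧
      (∀ μ, (k μ ≠ 1 ∧ k (μ + 1) = 1) →
        Int.ModEq ((p : ℤ) ^ f - 1)
          (Sig p f (sW f (b1 f k) (zero2 f) J))
          (Sig p f (sW f (bmu1 p f k μ) (bmu2 f μ) (Jmu μ))) ∧
        Int.ModEq ((p : ℤ) ^ f - 1)
          (Sig p f (tW f (b1 f k) (zero2 f) J))
          (Sig p f (tW f (bmu1 p f k μ) (bmu2 f μ) (Jmu μ)))) := by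
  haveI : NeZero f := ⟨by omega⟩
  have hp0 : 0 < p := hp.pos
  have ht : ∀ (c1 c2 : ZMod f → ℤ) (S : Set (ZMod f)), tW f c1 c2 S = sW f c1 c2 Sᶜ := by
    intro c1 c2 S
    funext i
    by_cases h : i ∈ S <;> simp [tW, sW, h]
  refine ⟨{j | if k j = 1 then nu f k j ∈ J else j ∈ J},
    {j | if k j = 1 then nu f k j ∉ J else j ∈ J},
    fun μ => {j | if k j = 1 then (if nu f k j = μ then μ ∉ J else nu f k j ∈ J) else j ∈ J},
    ?_, ?_, ?_, ?_, ?_, ?_⟩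
  · intro i hki
    refine ⟨?_, ?_, fun μ _ => ?_⟩ <;> simp [Set.mem_setOf_eq, hki]
  · -- s, J'
    refine main_congr p f hp0 k hnotone (· ∈ J) J _ _ _ ?_ ?_ ?_
    · intro j hkj hk1
      refine ⟨by simp [bp1, hkj, hk1], rfl, by simp [Set.mem_setOf_eq, hkj]⟩
    · intro j hkj hk1
      refine ⟨by simp [Set.mem_setOf_eq, hkj], fun hJ => ?_, fun hJ => ?_⟩
      · simp only [bp1, if_neg hkj, if_pos hk1, hJ, if_true]; ring
      · simp [zero2, hJ]
    · intro j hkj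
      exact ⟨by simp [bp1, hkj], rfl, by simp [Set.mem_setOf_eq, hkj]⟩
  · -- t, J'
    rw [ht, ht]
    refine main_congr p f hp0 k hnotone (· ∉ J) Jᶜ _ _ _ ?_ ?_ ?_
    · intro j hkj hk1
      refine ⟨by simp [bp1, hkj, hk1], rfl, by simp [Set.mem_setOf_eq, hkj]⟩
    · intro j hkj hk1
      refine ⟨by simp [Set.mem_setOf_eq, hkj], fun hJ => ?_, fun hJ => ?_⟩
      · rw [Set.mem_compl_iff] at hJ
        simp only [bp1, if_neg hkj, if_pos hk1, hJ, not_false_iff, if_true]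
        ring_nf
      · rw [Set.mem_compl_iff, not_not] at hJ
        simp [zero2, hJ]
    · intro j hkj
      exact ⟨by simp [bp1, hkj], rfl, by simp [Set.mem_setOf_eq, hkj]⟩
  · -- s, JTh
    refine main_congr p f hp0 k hnotone (· ∉ J) J _ _ _ ?_ ?_ ?_
    · intro j hkj hk1
      refine ⟨by simp [bth1, hkj], by simp [bth2, hkj, hk1], by simp [Set.mem_setOf_eq, hkj]⟩
    · intro j hkj hk1
      refine ⟨by simp [Set.mem_setOf_eq, hkj], fun hJ => ?_, fun hJ => ?_⟩
      · simp only [bth1, if_neg hkj, hJ]; simp [hJ]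
      · simp [bth2, hkj, hk1, hJ]
    · intro j hkj
      exact ⟨by simp [bth1, hkj], by simp [bth2, hkj], by simp [Set.mem_setOf_eq, hkj]⟩
  · -- t, JTh
    rw [ht, ht]
    refine main_congr p f hp0 k hnotone (· ∈ J) Jᶜ _ _ _ ?_ ?_ ?_
    · intro j hkj hk1
      refine ⟨by simp [bth1, hkj], by simp [bth2, hkj, hk1], by simp [Set.mem_setOf_eq, hkj]⟩
    · intro j hkj hk1
      refine ⟨by simp [Set.mem_setOf_eq, hkj], fun hJ => ?_, fun hJ => ?_⟩
      · rw [Set.mem_compl_iff] at hJ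
        simp [bth1, hkj, hJ]
      · rw [Set.mem_compl_iff, not_not] at hJ
        simp [bth2, hkj, hk1, hJ]
    · intro j hkj
      exact ⟨by simp [bth1, hkj], by simp [bth2, hkj], by simp [Set.mem_setOf_eq, hkj]⟩
  · -- μ
    intro μ hμ
    obtain ⟨hkμ, hkμ1⟩ := hμ
    constructor
    · refine main_congr p f hp0 k hnotone
        (fun j => if j = μ then μ ∉ J else j ∈ J) J _ _ _ ?_ ?_ ?_
      · intro j hkj hk1
        have hjμ : j ≠ μ := by rintro rfl; exact hk1 hkμ1
        refine ⟨by simp [bmu1, bp1, hjμ, hkj, hk1], by simp [bmu2, hjμ],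
          by simp [Set.mem_setOf_eq, hkj]⟩
      · intro j hkj hk1
        refine ⟨by simp [Set.mem_setOf_eq, hkj], fun hJ => ?_, fun hJ => ?_⟩
        · by_cases hjμ : j = μ
          · subst hjμ
            simp [bmu1, hJ]
          · simp only [bmu1, if_neg hjμ, bp1, if_neg hkj, if_pos hk1, hJ]
            simp [hjμ, hJ]
            ring
        · by_cases hjμ : j = μ
          · subst hjμ
            simp [bmu2, hJ]
          · simp [bmu2, hjμ, hJ]
      · intro j hkj
        have hjμ : j ≠ μ := fun h => hkμ (h ▸ hkj)
        exact ⟨by simp [bmu1, bp1, hjμ, hkj], by simp [bmu2, hjμ],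
          by simp [Set.mem_setOf_eq, hkj]⟩
    · rw [ht, ht]
      refine main_congr p f hp0 k hnotone
        (fun j => if j = μ then μ ∈ J else j ∉ J) Jᶜ _ _ _ ?_ ?_ ?_
      · intro j hkj hk1
        have hjμ : j ≠ μ := by rintro rfl; exact hk1 hkμ1
        refine ⟨by simp [bmu1, bp1, hjμ, hkj, hk1], by simp [bmu2, hjμ],
          by simp [Set.mem_setOf_eq, hkj]⟩
      · intro j hkj hk1
        refine ⟨by simp [Set.mem_setOf_eq, hkj], fun hJ => ?_, fun hJ => ?_⟩
        · rw [Set.mem_compl_iff] at hJ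
          by_cases hjμ : j = μ
          · subst hjμ
            simp [bmu1, hJ]
          · simp only [bmu1, if_neg hjμ, bp1, if_neg hkj, if_pos hk1]
            simp [hjμ, hJ]
            ring
        · rw [Set.mem_compl_iff, not_not] at hJ
          by_cases hjμ : j = μ
          · subst hjμ
            simp [bmu2, hJ]
          · simp [bmu2, hjμ, hJ]
      · intro j hkj
        have hjμ : j ≠ μ := fun h => hkμ (h ▸ hkj)
        refine ⟨by simp [bmu1, bp1, hjμ, hkj], by simp [bmu2, hjμ], ?_⟩
        simp only [Set.mem_compl_iff, Set.mem_setOf_eq, if_pos hkj]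
        by_cases hnμ : nu f k j = μ <;> simp [hnμ]
end
end

section
/- Suppose J′, J^Θ ⊆ ℤ/fℤ satisfy Σ(s(b′,J′)) ≡ Σ(s(b^Θ,J^Θ)) (mod p^f − 1) and Σ(t(b′,J′)) ≡ Σ(t(b^Θ,J^Θ)) (mod p^f − 1). Then for every ν ∈ M̃: either ν ∈ J′, T_ν ⊆ J′ and T_ν ∩ J^Θ = ∅; or ν ∉ J′, T_ν ∩ J′ = ∅ and T_ν ⊆ J^Θ. -/
open scoped Classical
noncomputable section

/-- Lemma 5.8 of the paper: if the `J′`- and `J^Θ`-congruences hold, then for each `ν ∈ M̃`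
either `ν ∈ J′`, `T_ν ⊆ J′` and `T_ν ∩ J^Θ = ∅`, or `ν ∉ J′`, `T_ν ∩ J′ = ∅` and
`T_ν ⊆ J^Θ`. -/
theorem stmt4 (p f : ℕ) (hp : p.Prime) (hodd : Odd p) (hf : 1 ≤ f)
    (k : ZMod f → ℤ)
    (hk : ∀ i, 1 ≤ k i ∧ k i ≤ (p : ℤ))
    (hone : ∃ i, k i = 1) (hnotone : ∃ i, k i ≠ 1)
    (h21 : ∀ i, ¬(k i = 2 ∧ k (i + 1) = 1))
    (J' JTh : Set (ZMod f))
    (hs : Int.ModEq ((p : ℤ) ^ f - 1)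
      (Sig p f (sW f (bp1 p f k) (zero2 f) J'))
      (Sig p f (sW f (bth1 p f k) (bth2 f k) JTh)))
    (ht : Int.ModEq ((p : ℤ) ^ f - 1)
      (Sig p f (tW f (bp1 p f k) (zero2 f) J'))
      (Sig p f (tW f (bth1 p f k) (bth2 f k) JTh))) :
    ∀ ν, (k ν ≠ 1 ∧ k (ν + 1) = 1) →
      (ν ∈ J' ∧ Trun f k ν ⊆ J' ∧ Trun f k ν ∩ JTh = ∅) ∨
      (ν ∉ J' ∧ Trun f k ν ∩ J' = ∅ ∧ Trun f k ν ⊆ JTh) := by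
  haveI : NeZero f := ⟨by omega⟩
  have hp3 : 3 ≤ p := by
    have h2 := hp.two_le
    have := Nat.odd_iff.mp hodd
    omega
  have hp3' : (3:ℤ) ≤ (p:ℤ) := by exact_mod_cast hp3
  obtain ⟨m, rfl⟩ : ∃ m, f = m + 1 := ⟨f - 1, by omega⟩
  set s1 : ZMod (m+1) → ℤ := sW (m+1) (bp1 p (m+1) k) (zero2 (m+1)) J' with hs1def
  set s2 : ZMod (m+1) → ℤ := sW (m+1) (bth1 p (m+1) k) (bth2 (m+1) k) JTh with hs2def
  set d : ZMod (m+1) → ℤ := fun i => s1 i - s2 i with hddef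
  set N : ℤ := (p:ℤ)^(m+1) - 1 with hNdef
  have hppos : (1:ℤ) < (p:ℤ) := by linarith
  have hNpos : 0 < N := by
    have : (1:ℤ) < (p:ℤ)^(m+1) := one_lt_pow₀ hppos (by omega)
    omega
  set B : ZMod (m+1) → ℤ :=
    fun i => ∑ j ∈ Finset.range (m+1), (p:ℤ)^(m - j) * d (i + 1 + (j : ZMod (m+1))) with hBdef
  -- recurrence
  have hrec : ∀ i, B (i+1) = (p:ℤ) * B i - N * d (i+1) := by
    intro i
    have h1 : B (i+1) = (∑ j ∈ Finset.range m, (p:ℤ)^(m - j) * d (i + 1 + 1 + (j : ZMod (m+1)))) + d (i+1) := by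
      simp only [hBdef]
      rw [Finset.sum_range_succ]
      congr 1
      have : (i + 1 + 1 + ((m : ℕ) : ZMod (m+1))) = i + 1 := by
        have hc : ((m+1 : ℕ) : ZMod (m+1)) = 0 := by
          exact_mod_cast ZMod.natCast_self (m+1)
        push_cast at hc ⊢
        linear_combination hc
      rw [this]
      simp
    have h2 : (p:ℤ) * B i = (∑ j ∈ Finset.range m, (p:ℤ)^(m - j) * d (i + 1 + 1 + (j : ZMod (m+1)))) + (p:ℤ)^(m+1) * d (i+1) := by
      simp only [hBdef]
      rw [Finset.sum_range_succ']
      rw [mul_add, Finset.mul_sum]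
      congr 1
      · apply Finset.sum_congr rfl
        intro j hj
        simp only [Finset.mem_range] at hj
        have he : (p:ℤ) * (p:ℤ)^(m - (j+1)) = (p:ℤ)^(m - j) := by
          rw [← pow_succ']
          congr 1
          omega
        have hi : (i + 1 + ((j+1 : ℕ) : ZMod (m+1))) = (i + 1 + 1 + (j : ZMod (m+1))) := by
          push_cast
          ring
        rw [hi, ← he]
        ring
      · simp only [Nat.sub_zero, Nat.cast_zero, add_zero]
        rw [pow_succ']
        ring
    rw [h1, h2, hNdef]
    ring
  -- B (-1) = Sig s1 - Sig s2
  have hB0 : B (-1) = Sig p (m+1) s1 - Sig p (m+1) s2 := by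
    simp only [hBdef, Sig]
    rw [← Finset.sum_sub_distrib]
    apply Finset.sum_congr rfl
    intro j hj
    have : (-1 : ZMod (m+1)) + 1 + (j : ZMod (m+1)) = (j : ZMod (m+1)) := by ring
    rw [this, hddef]
    simp only [Nat.add_sub_cancel]
    ring
  -- divisibility
  have hdvd : ∀ i, N ∣ B i := by
    have hstep : ∀ n : ℕ, N ∣ B (-1 + (n : ZMod (m+1))) := by
      intro n
      induction n with
      | zero =>
        simp only [Nat.cast_zero, add_zero]
        rw [hB0]
        exact dvd_sub_comm.mp (Int.ModEq.dvd hs)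
      | succ n ih =>
        have he : (-1 : ZMod (m+1)) + ((n+1 : ℕ) : ZMod (m+1)) = (-1 + (n:ZMod (m+1))) + 1 := by
          push_cast
          ring
        rw [he, hrec]
        exact Dvd.dvd.sub (Dvd.dvd.mul_left ih _) (Dvd.dvd.mul_right dvd_rfl _)
    intro i
    have : i = -1 + (((i+1).val : ℕ) : ZMod (m+1)) := by
      rw [ZMod.natCast_val, ZMod.cast_id]
      ring
    rw [this]
    exact hstep _
  -- digit bounds
  have hdb : ∀ i, -(p:ℤ) ≤ d i ∧ d i ≤ (p:ℤ) := by
    intro i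
    have h1 := hk i
    have h2 := hk (i+1)
    have h3 := h21 i
    simp only [hddef, hs1def, hs2def, sW, bp1, bth1, bth2, zero2]
    split_ifs <;> omega
  have hG : ∀ i0 : ZMod (m+1), |B i0| < 2 * N := by
    intro i0
    have hb : |B i0| ≤ (p:ℤ) * ∑ j ∈ Finset.range (m+1), (p:ℤ)^(m - j) := by
      calc |B i0| ≤ ∑ j ∈ Finset.range (m+1), |(p:ℤ)^(m-j) * d (i0+1+(j:ZMod (m+1)))| :=
            Finset.abs_sum_le_sum_abs _ _
        _ ≤ ∑ j ∈ Finset.range (m+1), (p:ℤ)^(m-j) * p := by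
            apply Finset.sum_le_sum
            intro j hj
            rw [abs_mul, abs_pow, abs_of_nonneg (by positivity : (0:ℤ) ≤ (p:ℤ))]
            have hd' : |d (i0+1+(j:ZMod (m+1)))| ≤ (p:ℤ) := abs_le.mpr ⟨(hdb _).1, (hdb _).2⟩
            exact mul_le_mul_of_nonneg_left hd' (by positivity)
        _ = (p:ℤ) * ∑ j ∈ Finset.range (m+1), (p:ℤ)^(m-j) := by
            rw [Finset.mul_sum]
            apply Finset.sum_congr rfl
            intros
            ring
    have hsum : (∑ j ∈ Finset.range (m+1), (p:ℤ)^(m - j)) * ((p:ℤ) - 1) = N := by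
      have hg := geom_sum_mul (p:ℤ) (m+1)
      rw [hNdef, ← hg]
      congr 1
      have hr := Finset.sum_range_reflect (fun j => (p:ℤ)^j) (m+1)
      rw [← hr]
      apply Finset.sum_congr rfl
      intro j hj
      simp only [Finset.mem_range] at hj
      congr 1
    have hGpos : 0 < ∑ j ∈ Finset.range (m+1), (p:ℤ)^(m - j) := by
      apply Finset.sum_pos
      · intro j hj
        positivity
      · exact Finset.nonempty_range_iff.mpr (by omega)
    nlinarith [hb, hsum, hGpos, abs_nonneg (B i0)]
  set ε : ZMod (m+1) → ℤ := fun i => B i / N with hEdef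
  have hBN : ∀ i, B i = N * ε i := by
    intro i
    simp only [hEdef]
    exact (Int.mul_ediv_cancel' (hdvd i)).symm
  have hE : ∀ i, ε i = -1 ∨ ε i = 0 ∨ ε i = 1 := by
    intro i
    have h1 := hG i
    rw [hBN i, abs_mul, abs_of_pos hNpos] at h1
    have h2 : |ε i| < 2 := by
      nlinarith [abs_nonneg (ε i)]
    have h3 := abs_lt.mp h2
    omega
  have hd2 : ∀ i, d (i+1) = (p:ℤ) * ε i - ε (i+1) := by
    intro i
    have h1 := hrec i
    rw [hBN, hBN] at h1
    have h2 : N * d (i+1) = N * ((p:ℤ) * ε i - ε (i+1)) := by linear_combination h1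
    exact mul_left_cancel₀ (by omega) h2
  -- membership lemma at positions with k = 1
  have hmem : ∀ i : ZMod (m+1), k (i+1) = 1 →
      (ε i = 1 → ((i+1) ∈ J' ∧ (i+1) ∉ JTh)) ∧ (ε i = -1 → ((i+1) ∉ J' ∧ (i+1) ∈ JTh)) := by
    intro i hki
    have hdi := hd2 i
    have e2 := hE (i+1)
    simp only [hddef, hs1def, hs2def, sW, bp1, bth1, bth2, zero2] at hdi
    refine ⟨fun he => ⟨?_, ?_⟩, fun he => ⟨?_, ?_⟩⟩
    · by_contra hc
      rw [he] at hdi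
      simp only [hc, if_false] at hdi
      split_ifs at hdi <;> rcases e2 with h|h|h <;> omega
    · intro hc
      rw [he] at hdi
      simp only [hc, if_true] at hdi
      split_ifs at hdi <;> rcases e2 with h|h|h <;> omega
    · intro hc
      rw [he] at hdi
      simp only [hc, if_true] at hdi
      split_ifs at hdi <;> rcases e2 with h|h|h <;> omega
    · by_contra hc
      rw [he] at hdi
      simp only [hc, if_false] at hdi
      split_ifs at hdi <;> rcases e2 with h|h|h <;> omega
  -- propagation lemma
  have hprop : ∀ i : ZMod (m+1), k (i+1) = 1 → k (i+1+1) = 1 → ε (i+1) = ε i := by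
    intro i h1 h2
    have hdi := hd2 i
    have e1 := hE i
    have e2 := hE (i+1)
    simp only [hddef, hs1def, hs2def, sW, bp1, bth1, bth2, zero2] at hdi
    rcases e1 with h|h|h <;> rw [h] at hdi ⊢ <;>
      rcases e2 with h'|h'|h' <;> rw [h'] at hdi ⊢ <;>
      split_ifs at hdi <;> omega
  intro ν hν
  have hν1 := hν.1
  have hν2 := hν.2
  have hkν := hk ν
  have hkν3 : 3 ≤ k ν := by
    have h3 := h21 ν
    omega
  have hdν : d ν = (p:ℤ) * ε (ν - 1) - ε ν := by
    have h := hd2 (ν - 1)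
    rwa [sub_add_cancel] at h
  have hkey : (ν ∈ J' → ε ν = 1) ∧ (ν ∉ J' → ε ν = -1) := by
    have e1 := hE (ν-1)
    have e2 := hE ν
    have ev1 : s1 ν = if ν ∈ J' then k ν - 2 else 0 := by
      simp only [hs1def, sW, bp1, zero2]
      rw [if_neg hν1, if_pos hν2]
    have ev2 : s2 ν = if ν ∈ JTh then k ν - 1 else -1 := by
      simp only [hs2def, sW, bth1, bth2]
      rw [if_neg hν1, if_pos (show k ν ≠ 1 ∧ k (ν+1) = 1 from ⟨hν1, hν2⟩)]
    have hdi : (if ν ∈ J' then k ν - 2 else 0) - (if ν ∈ JTh then k ν - 1 else -1)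
        = (p:ℤ) * ε (ν - 1) - ε ν := by
      rw [← ev1, ← ev2]
      exact hdν
    constructor <;> intro hm <;>
      [rw [if_pos hm] at hdi; rw [if_neg hm] at hdi] <;>
      rcases e1 with h|h|h <;> rw [h] at hdi <;>
      rcases e2 with h'|h'|h' <;> split_ifs at hdi <;> omega
  -- run propagation
  have hrun : ∀ n : ℕ, (∀ j : ℕ, 1 ≤ j → j ≤ n + 1 → k (ν + (j : ZMod (m+1))) = 1) →
      ε (ν + (n : ZMod (m+1))) = ε ν := by
    intro n
    induction n with
    | zero => intro _; simp
    | succ n ih =>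
      intro h
      have h1 : ε (ν + (n : ZMod (m+1))) = ε ν := ih (fun j hj1 hj2 => h j hj1 (by omega))
      have hk1 : k (ν + (n : ZMod (m+1)) + 1) = 1 := by
        have := h (n+1) (by omega) (by omega)
        push_cast at this
        convert this using 2
        ring
      have hk2 : k (ν + (n : ZMod (m+1)) + 1 + 1) = 1 := by
        have := h (n+2) (by omega) (by omega)
        push_cast at this
        convert this using 2
        ring
      have := hprop (ν + (n : ZMod (m+1))) hk1 hk2
      have he : ((n+1 : ℕ) : ZMod (m+1)) = (n : ZMod (m+1)) + 1 := by push_cast; ring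
      rw [he, ← add_assoc, this, h1]
  -- main membership claim for elements of the run
  have hclaim : ∀ i ∈ Trun (m+1) k ν,
      (ε ν = 1 → i ∈ J' ∧ i ∉ JTh) ∧ (ε ν = -1 → i ∉ J' ∧ i ∈ JTh) := by
    rintro i ⟨t, ht1, rfl, hks⟩
    obtain ⟨n, rfl⟩ : ∃ n, t = n + 1 := ⟨t - 1, by omega⟩
    have hA : ε (ν + (n : ZMod (m+1))) = ε ν := hrun n (fun j hj1 hj2 => hks j hj1 (by omega))
    have hk1 : k (ν + (n : ZMod (m+1)) + 1) = 1 := by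
      have := hks (n+1) (by omega) (by omega)
      push_cast at this
      convert this using 2
      ring
    have hM := hmem (ν + (n : ZMod (m+1))) hk1
    have he : ν + ((n+1 : ℕ) : ZMod (m+1)) = ν + (n : ZMod (m+1)) + 1 := by push_cast; ring
    rw [he]
    exact ⟨fun h1 => hM.1 (by rw [hA, h1]), fun h1 => hM.2 (by rw [hA, h1])⟩
  by_cases hJ : ν ∈ J'
  · left
    have hεν : ε ν = 1 := hkey.1 hJ
    refine ⟨hJ, fun i hi => ((hclaim i hi).1 hεν).1, ?_⟩
    apply Set.eq_empty_iff_forall_notMem.mpr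
    rintro i ⟨hi, hiT⟩
    exact ((hclaim i hi).1 hεν).2 hiT
  · right
    have hεν : ε ν = -1 := hkey.2 hJ
    refine ⟨hJ, ?_, fun i hi => ((hclaim i hi).2 hεν).2⟩
    apply Set.eq_empty_iff_forall_notMem.mpr
    rintro i ⟨hi, hiJ⟩
    exact ((hclaim i hi).2 hεν).1 hiJ
end
end

section
/- Let ν ∈ M̃ and suppose J′, J^ν ⊆ ℤ/fℤ satisfy Σ(s(b′,J′)) ≡ Σ(s(b^ν,J^ν)) (mod p^f − 1) and Σ(t(b′,J′)) ≡ Σ(t(b^ν,J^ν)) (mod p^f − 1). Then either ν ∈ J′, T_ν ⊆ J′ and T_ν ∩ J^ν = ∅; or ν ∉ J′, T_ν ∩ J′ = ∅ and T_ν ⊆ J^ν. -/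
open scoped Classical
noncomputable section

section AuxStmt5

private lemma peel5 (p f : ℕ) (v : ℕ → ℤ) (n s : ℕ) (hs : s < f) :
    ∑ j ∈ Finset.range (f - s), v (n + s + j) * (p:ℤ)^(f - 1 - s - j)
      = v (n + s) * (p:ℤ)^(f - 1 - s)
        + ∑ j ∈ Finset.range (f - (s+1)), v (n + (s+1) + j) * (p:ℤ)^(f - 1 - (s+1) - j) := by
  have h1 : f - s = (f - (s+1)) + 1 := by omega
  rw [h1, Finset.sum_range_succ']
  have hsum : ∀ x ∈ Finset.range (f - (s+1)),
      v (n + s + (x+1)) * (p:ℤ)^(f - 1 - s - (x+1))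
        = v (n + (s+1) + x) * (p:ℤ)^(f - 1 - (s+1) - x) := by
    intro x _
    have e1 : n + s + (x+1) = n + (s+1) + x := by omega
    have e2 : f - 1 - s - (x+1) = f - 1 - (s+1) - x := by omega
    rw [e1, e2]
  rw [Finset.sum_congr rfl hsum]
  have e3 : n + s + 0 = n + s := by omega
  have e4 : f - 1 - s - 0 = f - 1 - s := by omega
  rw [e3, e4, add_comm]

private lemma shift_key5 (p f : ℕ) (v : ℕ → ℤ) (hper : ∀ m, v (m + f) = v m) (n : ℕ) :
    (p:ℤ) * (∑ j ∈ Finset.range f, v (n + j) * (p:ℤ)^(f - 1 - j))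
      - (∑ j ∈ Finset.range f, v (n + 1 + j) * (p:ℤ)^(f - 1 - j))
      = ((p:ℤ)^f - 1) * v n := by
  set g : ℕ → ℤ := fun j => v (n + j) * (p:ℤ)^(f - j) with hg
  have hA : (p:ℤ) * (∑ j ∈ Finset.range f, v (n + j) * (p:ℤ)^(f - 1 - j))
      = ∑ j ∈ Finset.range f, g j := by
    rw [Finset.mul_sum]
    apply Finset.sum_congr rfl
    intro j hj
    simp only [hg]
    have : f - j = (f - 1 - j) + 1 := by
      have := Finset.mem_range.mp hj; omega
    rw [this, pow_succ]; ring
  have hB : (∑ j ∈ Finset.range f, v (n + 1 + j) * (p:ℤ)^(f - 1 - j))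
      = ∑ j ∈ Finset.range f, g (j+1) := by
    apply Finset.sum_congr rfl
    intro j _
    simp only [hg]
    have e1 : n + 1 + j = n + (j+1) := by omega
    have e2 : f - (j+1) = f - 1 - j := by omega
    rw [e1, e2]
  have h1 : ∑ j ∈ Finset.range (f+1), g j = (∑ j ∈ Finset.range f, g (j+1)) + g 0 :=
    Finset.sum_range_succ' g f
  have h2 : ∑ j ∈ Finset.range (f+1), g j = (∑ j ∈ Finset.range f, g j) + g f :=
    Finset.sum_range_succ g f
  have h3 : g 0 = v n * (p:ℤ)^f := by simp [hg]
  have h4 : g f = v n := by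
    simp only [hg, Nat.sub_self, pow_zero, mul_one, hper n]
  rw [hA, hB]
  have h5 : (∑ j ∈ Finset.range f, g j) - (∑ j ∈ Finset.range f, g (j+1)) = g 0 - g f := by
    linarith [h1, h2]
  rw [h5, h3, h4]; ring

private lemma shift_dvd5 (p f : ℕ) (v : ℕ → ℤ) (hper : ∀ m, v (m + f) = v m)
    (h0 : ((p:ℤ)^f - 1) ∣ ∑ j ∈ Finset.range f, v j * (p:ℤ)^(f - 1 - j)) :
    ∀ n : ℕ, ((p:ℤ)^f - 1) ∣ ∑ j ∈ Finset.range f, v (n + j) * (p:ℤ)^(f - 1 - j) := by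
  intro n
  induction n with
  | zero => simpa using h0
  | succ n ih =>
      have key := shift_key5 p f v hper n
      have heq : (∑ j ∈ Finset.range f, v (n + 1 + j) * (p:ℤ)^(f - 1 - j))
          = (p:ℤ) * (∑ j ∈ Finset.range f, v (n + j) * (p:ℤ)^(f - 1 - j))
            - ((p:ℤ)^f - 1) * v n := by linarith
      rw [heq]
      exact dvd_sub (ih.mul_left _) (dvd_mul_right _ _)

private lemma tail_bound5 (p f : ℕ) (hp3 : 3 ≤ p) (v : ℕ → ℤ)
    (hv : ∀ m, |v m| ≤ (p:ℤ)) (n : ℕ) :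
    ∀ m s, f - s = m →
      2 * |∑ j ∈ Finset.range (f - s), v (n + s + j) * (p:ℤ)^(f - 1 - s - j)|
        ≤ 3 * ((p:ℤ)^m - 1) := by
  intro m
  induction m with
  | zero =>
      intro s hsm
      rw [hsm]
      simp
  | succ m ih =>
      intro s hsm
      have hsf : s < f := by omega
      rw [peel5 p f v n s hsf]
      have h2 := ih (s+1) (by omega)
      have hub := hv (n + s)
      have hpow : f - 1 - s = m := by omega
      rw [hpow]
      have hppos : (0:ℤ) < (p:ℤ) := by positivity
      have hpos : (0:ℤ) < (p:ℤ)^m := pow_pos hppos m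
      have hp3' : (3:ℤ) ≤ (p:ℤ) := by exact_mod_cast hp3
      set T := ∑ j ∈ Finset.range (f - (s+1)), v (n + (s+1) + j) * (p:ℤ)^(f - 1 - (s+1) - j) with hT
      have habs : |v (n + s) * (p:ℤ)^m + T| ≤ |v (n + s)| * (p:ℤ)^m + |T| := by
        calc |v (n + s) * (p:ℤ)^m + T| ≤ |v (n + s) * (p:ℤ)^m| + |T| := abs_add_le _ _
          _ = |v (n + s)| * (p:ℤ)^m + |T| := by rw [abs_mul, abs_of_nonneg hpos.le]
      rw [pow_succ]
      nlinarith [habs, h2, hub, hpos, mul_le_mul_of_nonneg_right hub hpos.le]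

end AuxStmt5
section AuxStmt5b

private def uu (p f : ℕ) (k : ZMod f → ℤ) (ν : ZMod f) (J' Jν : Set (ZMod f)) (i : ZMod f) : ℤ :=
  sW f (bp1 p f k) (zero2 f) J' i - sW f (bmu1 p f k ν) (bmu2 f ν) Jν i

private lemma uu_bound (p f : ℕ) (k : ZMod f → ℤ) (ν : ZMod f) (J' Jν : Set (ZMod f))
    (hk : ∀ i, 1 ≤ k i ∧ k i ≤ (p : ℤ)) (hν1 : k ν ≠ 1) (i : ZMod f) :
    |uu p f k ν J' Jν i| ≤ (p:ℤ) := by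
  have h1 := hk i
  have h2 := hk (i+1)
  have h3 := hk ν
  rw [abs_le]
  by_cases hiν : i = ν
  · subst hiν
    simp only [uu, sW, bp1, bmu1, bmu2, zero2, if_pos rfl]
    split_ifs <;> constructor <;> omega
  · simp only [uu, sW, bp1, bmu1, bmu2, zero2, if_neg hiν]
    split_ifs <;> constructor <;> omega

private lemma uu_run (p f : ℕ) (k : ZMod f → ℤ) (ν : ZMod f) (J' Jν : Set (ZMod f))
    (hp3 : 3 ≤ p) (hν1 : k ν ≠ 1) (i : ZMod f) (hi : k i = 1) :
    (uu p f k ν J' Jν i = 0 ∨ uu p f k ν J' Jν i = bp1 p f k i ∨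
      uu p f k ν J' Jν i = -(bp1 p f k i)) ∧
    ((p:ℤ) - 1 ≤ bp1 p f k i) ∧
    (uu p f k ν J' Jν i = bp1 p f k i → i ∈ J' ∧ i ∉ Jν) ∧
    (uu p f k ν J' Jν i = -(bp1 p f k i) → i ∉ J' ∧ i ∈ Jν) := by
  have hiν : i ≠ ν := fun h => hν1 (h ▸ hi)
  have hp3' : (3:ℤ) ≤ (p:ℤ) := by exact_mod_cast hp3
  have hw : (p:ℤ) - 1 ≤ bp1 p f k i := by
    simp only [bp1, if_pos hi]
    split_ifs <;> omega
  have hwpos : 0 < bp1 p f k i := by linarith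
  have hui : uu p f k ν J' Jν i
      = (if i ∈ J' then bp1 p f k i else 0) - (if i ∈ Jν then bp1 p f k i else 0) := by
    simp only [uu, sW, bmu1, bmu2, zero2, if_neg hiν]
  refine ⟨?_, hw, ?_, ?_⟩
  · by_cases hJ : i ∈ J' <;> by_cases hN : i ∈ Jν <;> simp [hui, hJ, hN]
  · by_cases hJ : i ∈ J' <;> by_cases hN : i ∈ Jν <;> simp [hui, hJ, hN] <;> intro h <;> exfalso <;> omega
  · by_cases hJ : i ∈ J' <;> by_cases hN : i ∈ Jν <;> simp [hui, hJ, hN] <;> intro h <;> exfalso <;> omega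

private lemma uu_nu (p f : ℕ) (k : ZMod f → ℤ) (ν : ZMod f) (J' Jν : Set (ZMod f))
    (hν1 : k ν ≠ 1) (hν2 : k (ν + 1) = 1) :
    (ν ∈ J' ∧ ν ∈ Jν ∧ uu p f k ν J' Jν ν = -1) ∨
    (ν ∈ J' ∧ ν ∉ Jν ∧ uu p f k ν J' Jν ν = k ν - 1) ∨
    (ν ∉ J' ∧ ν ∈ Jν ∧ uu p f k ν J' Jν ν = -(k ν - 1)) ∨
    (ν ∉ J' ∧ ν ∉ Jν ∧ uu p f k ν J' Jν ν = 1) := by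
  have hui : uu p f k ν J' Jν ν
      = (if ν ∈ J' then k ν - 2 else 0) - (if ν ∈ Jν then k ν - 1 else -1) := by
    simp [uu, sW, bp1, bmu1, bmu2, zero2, hν1, hν2]
  by_cases hJ : ν ∈ J' <;> by_cases hN : ν ∈ Jν <;> simp [hui, hJ, hN] <;> ring

end AuxStmt5b
set_option maxHeartbeats 1600000 in
/-- Lemma 5.10 of the paper: if the `J′`- and `J^ν`-congruences hold for `ν ∈ M̃`, then
either `ν ∈ J′`, `T_ν ⊆ J′` and `T_ν ∩ J^ν = ∅`, or `ν ∉ J′`, `T_ν ∩ J′ = ∅` and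
`T_ν ⊆ J^ν`. -/
theorem stmt5 (p f : ℕ) (hp : p.Prime) (hodd : Odd p) (hf : 1 ≤ f)
    (k : ZMod f → ℤ)
    (hk : ∀ i, 1 ≤ k i ∧ k i ≤ (p : ℤ))
    (hone : ∃ i, k i = 1) (hnotone : ∃ i, k i ≠ 1)
    (h21 : ∀ i, ¬(k i = 2 ∧ k (i + 1) = 1))
    (ν : ZMod f) (hν : k ν ≠ 1 ∧ k (ν + 1) = 1)
    (J' Jν : Set (ZMod f))
    (hs : Int.ModEq ((p : ℤ) ^ f - 1)
      (Sig p f (sW f (bp1 p f k) (zero2 f) J'))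
      (Sig p f (sW f (bmu1 p f k ν) (bmu2 f ν) Jν)))
    (ht : Int.ModEq ((p : ℤ) ^ f - 1)
      (Sig p f (tW f (bp1 p f k) (zero2 f) J'))
      (Sig p f (tW f (bmu1 p f k ν) (bmu2 f ν) Jν))) :
    (ν ∈ J' ∧ Trun f k ν ⊆ J' ∧ Trun f k ν ∩ Jν = ∅) ∨
    (ν ∉ J' ∧ Trun f k ν ∩ J' = ∅ ∧ Trun f k ν ⊆ Jν) := by
  obtain ⟨hν1, hν2⟩ := hν
  haveI : NeZero f := ⟨by omega⟩
  have hp3 : 3 ≤ p := by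
    have h2 := hp.two_le
    rcases hodd with ⟨m, hm⟩
    omega
  have hp3' : (3:ℤ) ≤ (p:ℤ) := by exact_mod_cast hp3
  have hp0 : (0:ℤ) < (p:ℤ) := by positivity
  have hkν3 : 3 ≤ k ν := by
    have h1 := (hk ν).1
    have h2 := h21 ν
    omega
  have hkν := hk ν
  have hval : ((ν.val : ℕ) : ZMod f) = ν := by simp [ZMod.natCast_val, ZMod.cast_id]
  set v : ℕ → ℤ := fun m => uu p f k ν J' Jν ((m : ZMod f)) with hvdef
  have hper : ∀ m, v (m + f) = v m := by
    intro m
    simp only [hvdef]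
    congr 1
    push_cast [ZMod.natCast_self]
    ring
  have hv : ∀ m, |v m| ≤ (p:ℤ) := fun m => uu_bound p f k ν J' Jν hk hν1 _
  have hc : ∀ m : ℕ, ((Nat.cast (ν.val + 1 + m) : ZMod f)) = ν + (Nat.cast (m+1) : ZMod f) := by
    intro m
    push_cast [hval]
    ring
  set B : ℕ → ℤ := fun s =>
    ∑ j ∈ Finset.range (f - s), v (ν.val + 1 + s + j) * (p:ℤ)^(f - 1 - s - j) with hB
  -- divisibility of B 0
  have h0 : ((p:ℤ)^f - 1) ∣ ∑ j ∈ Finset.range f, v j * (p:ℤ)^(f - 1 - j) := by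
    have heq : ∑ j ∈ Finset.range f, v j * (p:ℤ)^(f - 1 - j)
        = Sig p f (sW f (bp1 p f k) (zero2 f) J')
          - Sig p f (sW f (bmu1 p f k ν) (bmu2 f ν) Jν) := by
      simp only [Sig, ← Finset.sum_sub_distrib]
      apply Finset.sum_congr rfl
      intro j _
      simp only [hvdef, uu]
      ring
    rw [heq]
    exact Int.ModEq.dvd hs.symm
  have hB0dvd : ((p:ℤ)^f - 1) ∣ B 0 := by
    simp only [hB]
    have := shift_dvd5 p f v hper h0 (ν.val + 1)
    simpa using this
  have hBound0 : 2 * |B 0| ≤ 3 * ((p:ℤ)^f - 1) := by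
    simp only [hB]
    have := tail_bound5 p f hp3 v hv (ν.val + 1) f 0 (by omega)
    simpa using this
  -- the main run induction
  have main : ∀ ε : ℤ, (ε = 1 ∨ ε = -1) → B 0 = ε * ((p:ℤ)^f - 1) →
      ∀ s : ℕ, (∀ j : ℕ, 1 ≤ j → j ≤ s → k (ν + (j : ZMod f)) = 1) →
        ((∀ j : ℕ, 1 ≤ j → j ≤ s →
            (ε = 1 → ν + (j : ZMod f) ∈ J' ∧ ν + (j : ZMod f) ∉ Jν) ∧
            (ε = -1 → ν + (j : ZMod f) ∉ J' ∧ ν + (j : ZMod f) ∈ Jν)) ∧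
          (∀ t : ℕ, t = s + 1 → k (ν + (t : ZMod f)) = 1 →
            B s = ε * ((p:ℤ)^(f - s) - 1))) := by
    intro ε hε hB0
    intro s
    induction s with
    | zero =>
        intro _hrun
        refine ⟨fun j h1 h2 => absurd h1 (by omega), fun t _ _ => ?_⟩
        simpa using hB0
    | succ s ih =>
        intro hrun
        have hruns : ∀ j : ℕ, 1 ≤ j → j ≤ s → k (ν + (j : ZMod f)) = 1 :=
          fun j a b => hrun j a (by omega)
        obtain ⟨hmem, hBfun⟩ := ih hruns
        have hks1 := hrun (s+1) (by omega) le_rfl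
        have hBs : B s = ε * ((p:ℤ)^(f - s) - 1) := hBfun (s+1) rfl hks1
        have hsf : s + 2 ≤ f := by
          by_contra hcon
          have h9 := hrun f (by omega) (by omega)
          rw [ZMod.natCast_self, add_zero] at h9
          exact hν1 h9
        have hpeel : B s = v (ν.val + 1 + s) * (p:ℤ)^(f - 1 - s) + B (s+1) := by
          simp only [hB]
          exact peel5 p f v (ν.val + 1) s (by omega)
        have htail : 2 * |B (s+1)| ≤ 3 * ((p:ℤ)^(f - (s+1)) - 1) := by
          simp only [hB]
          exact tail_bound5 p f hp3 v hv (ν.val + 1) (f - (s+1)) (s+1) rfl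
        have hvpt : v (ν.val + 1 + s) = uu p f k ν J' Jν (ν + (Nat.cast (s+1) : ZMod f)) := by
          simp only [hvdef]
          rw [hc s]
        rw [hvpt] at hpeel
        obtain ⟨hvals, hwge, himpP, himpN⟩ :=
          uu_run p f k ν J' Jν hp3 hν1 (ν + (Nat.cast (s+1) : ZMod f)) hks1
        set U := uu p f k ν J' Jν (ν + (Nat.cast (s+1) : ZMod f)) with hUdef
        set P := (p:ℤ)^(f - 1 - s) with hPdef
        have hP : (0:ℤ) < P := pow_pos hp0 _
        have hε2 : ε * ε = 1 := by rcases hε with rfl | rfl <;> norm_num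
        have heB : ε * B (s+1) ≤ |B (s+1)| := by
          rcases hε with rfl | rfl
          · simpa using le_abs_self (B (s+1))
          · simpa using neg_le_abs (B (s+1))
        have hexp : (p:ℤ)^(f - s) = P * p := by
          rw [hPdef, show f - s = (f - 1 - s) + 1 by omega, pow_succ]
        have hexp2 : f - (s+1) = f - 1 - s := by omega
        rw [hexp2] at htail
        have hsplit : (ε * U) * P = ((p:ℤ)^(f - s) - 1) - ε * B (s+1) := by
          have h1 : U * P = ε * ((p:ℤ)^(f - s) - 1) - B (s+1) := by linarith [hpeel, hBs]
          calc (ε * U) * P = ε * (U * P) := by ring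
            _ = ε * (ε * ((p:ℤ)^(f - s) - 1) - B (s+1)) := by rw [h1]
            _ = (ε * ε) * ((p:ℤ)^(f - s) - 1) - ε * B (s+1) := by ring
            _ = ((p:ℤ)^(f - s) - 1) - ε * B (s+1) := by rw [hε2]; ring
        have hkey : (p:ℤ) - 1 ≤ ε * U := by
          by_contra hcon
          push_neg at hcon
          have hcon2 : ε * U ≤ (p:ℤ) - 2 := by linarith [Int.lt_iff_add_one_le.mp hcon]
          have hmul : (ε * U) * P ≤ ((p:ℤ) - 2) * P := mul_le_mul_of_nonneg_right hcon2 hP.le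
          nlinarith [hsplit, htail, heB, hP, hexp, hmul]
        have hUe : U = ε * (bp1 p f k (ν + (Nat.cast (s+1) : ZMod f))) := by
          rcases hε with rfl | rfl <;> rcases hvals with h | h | h
          all_goals first
            | (rw [h]; ring1)
            | (exfalso; rw [h] at hkey; linarith [hwge, hp3'])
        have hmemS : (ε = 1 → ν + (Nat.cast (s+1) : ZMod f) ∈ J'
              ∧ ν + (Nat.cast (s+1) : ZMod f) ∉ Jν) ∧
            (ε = -1 → ν + (Nat.cast (s+1) : ZMod f) ∉ J'
              ∧ ν + (Nat.cast (s+1) : ZMod f) ∈ Jν) := by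
          constructor
          · rintro rfl
            exact himpP (by rw [hUe]; ring)
          · rintro rfl
            exact himpN (by rw [hUe]; ring)
        constructor
        · intro j hj1 hj2
          by_cases hjs : j ≤ s
          · exact hmem j hj1 hjs
          · have hj : j = s + 1 := by omega
            subst hj
            exact hmemS
        · intro t htt hkt
          subst htt
          have hpt1 : (ν + (Nat.cast (s+1) : ZMod f)) + 1 = ν + (Nat.cast (s+1+1) : ZMod f) := by
            push_cast
            ring
          have hki1 : k ((ν + (Nat.cast (s+1) : ZMod f)) + 1) = 1 := by
            rw [hpt1]
            exact hkt
          have hw1 : bp1 p f k (ν + (Nat.cast (s+1) : ZMod f)) = (p:ℤ) - 1 := by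
            simp only [bp1]
            rw [if_pos hks1, if_pos hki1]
          rw [hexp2]
          have h1 : B (s+1) = B s - U * P := by linarith [hpeel]
          rw [h1, hBs, hUe, hw1, hexp]
          ring
  -- decompose B 0
  have hDpos : (0:ℤ) < (p:ℤ)^f - 1 := by
    have h1 : (3:ℤ) ≤ (p:ℤ)^f := le_trans hp3' (le_self_pow₀ (by linarith) (by omega))
    linarith
  obtain ⟨t, htB⟩ := hB0dvd
  have habs_t : |t| ≤ 1 := by
    by_contra hcc
    push_neg at hcc
    have h2t : 2 ≤ |t| := by omega
    rw [htB, abs_mul, abs_of_nonneg hDpos.le] at hBound0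
    nlinarith [hDpos, h2t, hBound0]
  have ht3 : t = -1 ∨ t = 0 ∨ t = 1 := by
    have := abs_le.mp habs_t
    omega
  have hc4 := uu_nu p f k ν J' Jν hν1 hν2
  set U0 := uu p f k ν J' Jν ν with hU0def
  have hmodp : (p:ℤ) ∣ B 0 - U0 := by
    simp only [hB]
    rw [show f - 0 = (f-1) + 1 by omega, Finset.sum_range_succ]
    have hlast : v (ν.val + 1 + 0 + (f-1)) = U0 := by
      simp only [hvdef]
      congr 1
      rw [show ν.val + 1 + 0 + (f-1) = ν.val + f by omega]
      push_cast [ZMod.natCast_self, hval]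
      ring
    have hexp0 : f - 1 - 0 - (f-1) = 0 := by omega
    rw [hlast, hexp0, pow_zero, mul_one, add_sub_cancel_right]
    apply Finset.dvd_sum
    intro j hj
    have hj' := Finset.mem_range.mp hj
    have he : f - 1 - 0 - j = (f - 1 - 0 - j - 1) + 1 := by omega
    rw [he, pow_succ]
    exact ⟨v (ν.val + 1 + 0 + j) * (p:ℤ)^(f - 1 - 0 - j - 1), by ring⟩
  have habs0 : ∀ x : ℤ, (p:ℤ) ∣ x → |x| < (p:ℤ) → x = 0 :=
    fun x h h2 => Int.eq_zero_of_abs_lt_dvd h h2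
  rcases ht3 with ht0 | ht0 | ht0
  · -- t = -1 : negative case
    subst ht0
    have hB0eq : B 0 = (-1 : ℤ) * ((p:ℤ)^f - 1) := by rw [htB]; ring
    have hd1 : (p:ℤ) ∣ U0 - 1 := by
      have h1 : (p:ℤ) ∣ (p:ℤ)^f := dvd_pow_self _ (by omega)
      have h2 : (p:ℤ) ∣ B 0 - U0 := hmodp
      rw [hB0eq] at h2
      have h3 := dvd_add h1 h2
      have h4 : (p:ℤ)^f + ((-1 : ℤ) * ((p:ℤ)^f - 1) - U0) = -(U0 - 1) := by ring
      rw [h4] at h3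
      exact (dvd_neg.mp h3)
    have hνnJ : ν ∉ J' := by
      rcases hc4 with ⟨_, _, h⟩ | ⟨_, _, h⟩ | ⟨hJ, _, _⟩ | ⟨hJ, _, _⟩
      · exfalso
        rw [h] at hd1
        have : ((-1 : ℤ) - 1) = -2 := by norm_num
        rw [this] at hd1
        have := habs0 _ (dvd_neg.mp hd1) (by rw [abs_lt]; constructor <;> linarith)
        linarith
      · exfalso
        rw [h] at hd1
        have h4 : (p:ℤ) ∣ k ν - 2 := by
          have : k ν - 1 - 1 = k ν - 2 := by ring
          rwa [this] at hd1
        have := habs0 _ h4 (by rw [abs_lt]; constructor <;> linarith [hkν.2])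
        linarith
      · exact hJ
      · exact hJ
    refine Or.inr ⟨hνnJ, ?_, ?_⟩
    · apply Set.eq_empty_iff_forall_notMem.mpr
      rintro x ⟨hx, hxJ⟩
      obtain ⟨s, hs1, hxeq, hrun⟩ := hx
      have hm := (main (-1) (Or.inr rfl) hB0eq s hrun).1 s hs1 le_rfl
      exact (hm.2 rfl).1 (by rw [← hxeq]; exact hxJ)
    · intro x hx
      obtain ⟨s, hs1, hxeq, hrun⟩ := hx
      have hm := (main (-1) (Or.inr rfl) hB0eq s hrun).1 s hs1 le_rfl
      rw [hxeq]
      exact (hm.2 rfl).2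
  · -- t = 0 : impossible
    exfalso
    subst ht0
    have hpU : (p:ℤ) ∣ U0 := by
      rw [htB] at hmodp
      simpa using hmodp
    have hU0z : U0 = 0 := by
      apply habs0 _ hpU
      rcases hc4 with ⟨_, _, h⟩ | ⟨_, _, h⟩ | ⟨_, _, h⟩ | ⟨_, _, h⟩ <;> rw [h] <;>
        rw [abs_lt] <;> constructor <;> linarith [hkν.2]
    rcases hc4 with ⟨_, _, h⟩ | ⟨_, _, h⟩ | ⟨_, _, h⟩ | ⟨_, _, h⟩ <;> rw [hU0z] at h <;> linarith
  · -- t = 1 : positive case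
    subst ht0
    have hB0eq : B 0 = (1 : ℤ) * ((p:ℤ)^f - 1) := by rw [htB]; ring
    have hd1 : (p:ℤ) ∣ U0 + 1 := by
      have h1 : (p:ℤ) ∣ (p:ℤ)^f := dvd_pow_self _ (by omega)
      have h2 : (p:ℤ) ∣ B 0 - U0 := hmodp
      rw [hB0eq] at h2
      have h3 := dvd_sub h1 h2
      have h4 : (p:ℤ)^f - ((1 : ℤ) * ((p:ℤ)^f - 1) - U0) = U0 + 1 := by ring
      rw [h4] at h3
      exact h3
    have hνJ : ν ∈ J' := by
      rcases hc4 with ⟨hJ, _, _⟩ | ⟨hJ, _, _⟩ | ⟨_, _, h⟩ | ⟨_, _, h⟩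
      · exact hJ
      · exact hJ
      · exfalso
        rw [h] at hd1
        have h4 : (p:ℤ) ∣ 2 - k ν := by
          have : -(k ν - 1) + 1 = 2 - k ν := by ring
          rwa [this] at hd1
        have := habs0 _ h4 (by rw [abs_lt]; constructor <;> linarith [hkν.2])
        linarith
      · exfalso
        rw [h] at hd1
        have h4 : (p:ℤ) ∣ 2 := by
          have : (1 : ℤ) + 1 = 2 := by norm_num
          rwa [this] at hd1
        have := habs0 _ h4 (by rw [abs_lt]; constructor <;> linarith)
        linarith
    refine Or.inl ⟨hνJ, ?_, ?_⟩
    · intro x hx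
      obtain ⟨s, hs1, hxeq, hrun⟩ := hx
      have hm := (main 1 (Or.inl rfl) hB0eq s hrun).1 s hs1 le_rfl
      rw [hxeq]
      exact (hm.1 rfl).1
    · apply Set.eq_empty_iff_forall_notMem.mpr
      rintro x ⟨hx, hxJ⟩
      obtain ⟨s, hs1, hxeq, hrun⟩ := hx
      have hm := (main 1 (Or.inl rfl) hB0eq s hrun).1 s hs1 le_rfl
      exact (hm.1 rfl).2 (by rw [← hxeq]; exact hxJ)
end
end

section
/- Suppose J′, J^Θ ⊆ ℤ/fℤ satisfy Σ(s(b′,J′)) ≡ Σ(s(b^Θ,J^Θ)) (mod p^f − 1) and Σ(t(b′,J′)) ≡ Σ(t(b^Θ,J^Θ)) (mod p^f − 1). Then there exists J ⊆ ℤ/fℤ such that i ∈ J ⟺ i ∈ J′ for all i ∉ J₀, and Σ(s(b,J)) ≡ Σ(s(b′,J′)) (mod p^f − 1) and Σ(t(b,J)) ≡ Σ(t(b′,J′)) (mod p^f − 1). -/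
open scoped Classical
noncomputable section

/-!
Write `a`, `β` for the indicators of `J′`, `J^Θ`. Modulo `p ^ f - 1`, `Σ` does not see cyclic
carries `p w_i - w_{i+1}`; removing them along the runs `T_ν` turns the hypothesis on the
`s`-sums into `Σ(z) ≡ 0` for a digit vector `z` with `|z_i| ≤ p`. Such a vector is itself a
carry pattern, with carries in `{-1, 0, 1}`. Reading this off along a block `{ν} ∪ T_ν` forces the
carries on `T_ν` to vanish, `a - β` to be constant and nonzero on `T_ν`, and `a_ν = a_{ν+1}`.
So `J′` is constant on every block, and then `J = J′` satisfies both congruences.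
-/

section Sig

variable {p f : ℕ}

lemma Sig_sub (v w : ZMod f → ℤ) :
    Sig p f (fun i => v i - w i) = Sig p f v - Sig p f w := by
  simp only [Sig, sub_mul, Finset.sum_sub_distrib]

lemma Sig_add (v w : ZMod f → ℤ) :
    Sig p f (fun i => v i + w i) = Sig p f v + Sig p f w := by
  simp only [Sig, add_mul, Finset.sum_add_distrib]

lemma Sig_const_mul (c : ℤ) (v : ZMod f → ℤ) :
    Sig p f (fun i => c * v i) = c * Sig p f v := by
  simp only [Sig, Finset.mul_sum, mul_assoc]

/-- The sum telescopes, and the carry out of the top digit re-enters at the bottom. -/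
lemma Sig_mul_sub_shift (hf : 1 ≤ f) (w : ZMod f → ℤ) :
    Sig p f (fun i => p * w i - w (i + 1)) = ((p : ℤ) ^ f - 1) * w 0 := by
  obtain ⟨n, rfl⟩ : ∃ n, f = n + 1 := ⟨f - 1, by omega⟩
  let u : ℕ → ℤ := fun i => w i * (p : ℤ) ^ (n + 1 - i)
  calc Sig p (n + 1) (fun i => p * w i - w (i + 1))
      = ∑ i ∈ Finset.range (n + 1), (u i - u (i + 1)) := by
        refine Finset.sum_congr rfl fun i hi => ?_
        have hi : i ≤ n := Nat.lt_succ_iff.mp (Finset.mem_range.mp hi)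
        simp only [u, Nat.cast_succ, show n + 1 - i = n - i + 1 by omega,
          show n + 1 - (i + 1) = n - i by omega, Nat.add_sub_cancel, pow_succ]
        ring
    _ = ((p : ℤ) ^ (n + 1) - 1) * w 0 := by
        rw [Finset.sum_range_sub']
        simp only [u, Nat.cast_zero, Nat.sub_zero, ZMod.natCast_self, Nat.sub_self, pow_zero]
        ring

lemma Sig_shift_modEq (hf : 1 ≤ f) (v : ZMod f → ℤ) :
    Sig p f (fun i => v (i + 1)) ≡ p * Sig p f v [ZMOD (p : ℤ) ^ f - 1] := by
  have h := Sig_mul_sub_shift (p := p) hf v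
  rw [Sig_sub, Sig_const_mul] at h
  exact Int.modEq_iff_dvd.mpr ⟨v 0, h⟩

lemma Sig_rotate_modEq (hf : 1 ≤ f) (v : ZMod f → ℤ) (m : ℕ) :
    Sig p f (fun i => v (i + m)) ≡ p ^ m * Sig p f v [ZMOD (p : ℤ) ^ f - 1] := by
  induction m with
  | zero => simp only [Nat.cast_zero, add_zero, pow_zero, one_mul, Int.ModEq.refl]
  | succ m ih =>
    calc Sig p f (fun i => v (i + (m + 1 : ℕ)))
        = Sig p f (fun i => v (i + 1 + m)) := by
          simp only [Nat.cast_succ, add_comm (m : ZMod f), add_assoc]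
      _ ≡ p * Sig p f (fun i => v (i + m)) [ZMOD (p : ℤ) ^ f - 1] :=
          Sig_shift_modEq hf (fun i => v (i + m))
      _ ≡ p * (p ^ m * Sig p f v) [ZMOD (p : ℤ) ^ f - 1] := ih.mul_left _
      _ = p ^ (m + 1) * Sig p f v := by ring

lemma Sig_abs_mul_le (hp : 1 ≤ p) {v : ZMod f → ℤ} (hv : ∀ i, |v i| ≤ p) :
    |Sig p f v| * (p - 1) ≤ p * ((p : ℤ) ^ f - 1) := by
  have hp0 : (0 : ℤ) ≤ p := by positivity
  calc |Sig p f v| * (p - 1)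
      ≤ (∑ i ∈ Finset.range f, p * (p : ℤ) ^ (f - 1 - i)) * (p - 1) := by
        refine mul_le_mul_of_nonneg_right ((Finset.abs_sum_le_sum_abs _ _).trans
          (Finset.sum_le_sum fun i _ => ?_)) (by omega)
        rw [abs_mul, abs_pow, abs_of_nonneg hp0]
        exact mul_le_mul_of_nonneg_right (hv _) (by positivity)
    _ = p * ((p : ℤ) ^ f - 1) := by
        rw [← Finset.mul_sum, Finset.sum_range_reflect (fun i => (p : ℤ) ^ i), mul_assoc,
          geom_sum_mul]

end Sig

/-- The carry `c_i` is `Σ(z(· + i)) / (p ^ f - 1)`; it lies in `{-1, 0, 1}` because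
`|Σ(z(· + i))| ≤ p (p ^ f - 1) / (p - 1) < 2 (p ^ f - 1)`. -/
theorem exists_carries_of_Sig_modEq_zero {p f : ℕ} (hp : 3 ≤ p) (hf : 1 ≤ f)
    {z : ZMod f → ℤ} (hz : ∀ i, |z i| ≤ p) (h : Sig p f z ≡ 0 [ZMOD (p : ℤ) ^ f - 1]) :
    ∃ c : ZMod f → ℤ, (∀ i, |c i| ≤ 1) ∧ ∀ i, z i = p * c i - c (i + 1) := by
  have : NeZero f := ⟨by omega⟩
  set N : ℤ := (p : ℤ) ^ f - 1 with hN
  have hN0 : 0 < N := by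
    have : (1 : ℤ) < (p : ℤ) ^ f := one_lt_pow₀ (by omega) (by omega)
    omega
  have hrot : ∀ i : ZMod f, N ∣ Sig p f (fun j => z (j + i)) := fun i => by
    have h' := (Sig_rotate_modEq hf z i.val).trans (h.mul_left _)
    rw [ZMod.natCast_zmod_val, mul_zero] at h'
    exact Int.ModEq.dvd h'.symm |>.trans (by simp)
  choose c hc using hrot
  refine ⟨c, fun i => ?_, fun i => ?_⟩
  · have hbd := Sig_abs_mul_le (by omega) fun j => hz (j + i)
    rw [hc, abs_mul, abs_of_pos hN0, ← hN] at hbd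
    by_contra hc2
    have h2 : (2 : ℤ) ≤ |c i| := by omega
    have hp' : (3 : ℤ) ≤ p := by exact_mod_cast hp
    nlinarith [mul_le_mul_of_nonneg_left h2 (by nlinarith : 0 ≤ N * (p - 1))]
  · have hshift := Sig_mul_sub_shift (p := p) hf fun j => z (j + i)
    rw [Sig_sub, Sig_const_mul, hc, zero_add] at hshift
    simp only [add_assoc, add_comm (1 : ZMod f) i] at hshift
    rw [hc (i + 1), ← hN] at hshift
    exact mul_left_cancel₀ hN0.ne' (by linear_combination -hshift)

lemma ZMod.induction_on_runs_succ {f : ℕ} [NeZero f] {q P : ZMod f → Prop} (hex : ∃ j, ¬ q j)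
    (hstep : ∀ x, q x → (q (x + 1) → P (x + 1)) → P x) : ∀ x, q x → P x := by
  obtain ⟨j, hj⟩ := hex
  suffices ∀ n : ℕ, ∀ x, ¬ q (x + n) → q x → P x from fun x =>
    this (j - x).val x (by rwa [ZMod.natCast_zmod_val, add_sub_cancel])
  intro n
  induction n with
  | zero => intro x hx hqx; rw [Nat.cast_zero, add_zero] at hx; exact absurd hqx hx
  | succ n ih =>
    intro x hx hqx
    rw [Nat.cast_succ, add_comm (n : ZMod f), ← add_assoc] at hx
    exact hstep x hqx (ih (x + 1) hx)

lemma ZMod.induction_on_runs_pred {f : ℕ} [NeZero f] {q P : ZMod f → Prop} (hex : ∃ j, ¬ q j)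
    (hstep : ∀ x, q x → (q (x - 1) → P (x - 1)) → P x) : ∀ x, q x → P x := by
  obtain ⟨j, hj⟩ := hex
  intro x hx
  simpa using ZMod.induction_on_runs_succ (q := fun y => q (-y)) (P := fun y => P (-y))
    ⟨-j, by simpa using hj⟩
    (fun y hy h => hstep (-y) hy (by rwa [show -y - 1 = -(y + 1) by ring]))
    (-x) (by simpa using hx)

section Runs

variable {f : ℕ}

/-- The digit vector `s(b′, J′) − s(b^Θ, J^Θ)` with the carries along the runs `T_ν` removed
(see `sW_bp1_sub_sW_bth1`); here `a` and `b` stand for the indicators of `J′` and `J^Θ`. -/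
def runDefect (k a b : ZMod f → ℤ) (i : ZMod f) : ℤ :=
  if k i = 1 then (if k (i + 1) = 1 then (a (i + 1) - b (i + 1)) - (a i - b i) else 0)
  else if k (i + 1) = 1 then (a i - b i) * (k i - 2) + (1 - 2 * b i) + (a (i + 1) - b (i + 1))
  else (a i - b i) * (k i - 1)

lemma sW_bp1_sub_sW_bth1 (p : ℕ) (k : ZMod f → ℤ) (J' JTh : Set (ZMod f)) (i : ZMod f) :
    let w : ZMod f → ℤ := fun i => if k i = 1 then J'.indicator 1 i - JTh.indicator 1 i else 0
    sW f (bp1 p f k) (zero2 f) J' i - sW f (bth1 p f k) (bth2 f k) JTh i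
      = runDefect k (J'.indicator 1) (JTh.indicator 1) i + (p * w i - w (i + 1)) := by
  by_cases h1 : k i = 1 <;> by_cases h2 : k (i + 1) = 1 <;>
    by_cases h3 : i ∈ J' <;> by_cases h4 : i ∈ JTh <;>
    simp only [sW, zero2, bp1, bth1, bth2, runDefect, Set.indicator_apply, Pi.one_apply, ne_eq,
      h1, h2, h3, h4, not_true_eq_false, not_false_eq_true, and_true, and_false, ↓reduceIte] <;>
    ring

lemma abs_runDefect_le {p : ℕ} (hp : 2 ≤ p) {k a b : ZMod f → ℤ}
    (hk : ∀ i, 1 ≤ k i ∧ k i ≤ p) (ha : ∀ i, a i = 0 ∨ a i = 1) (hb : ∀ i, b i = 0 ∨ b i = 1)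
    (i : ZMod f) : |runDefect k a b i| ≤ p := by
  obtain ⟨hk1, hkp⟩ := hk i
  rw [abs_le]
  unfold runDefect
  rcases ha i with ha0 | ha0 <;> rcases hb i with hb0 | hb0 <;>
    rcases ha (i + 1) with ha1 | ha1 <;> rcases hb (i + 1) with hb1 | hb1 <;>
    simp only [ha0, hb0, ha1, hb1] <;> split_ifs <;> constructor <;> omega

end Runs

lemma eq_and_ne_of_block_start {p K A B A' B' g : ℤ}
    (hK3 : 3 ≤ K) (hKp : K ≤ p) (hA : A = 0 ∨ A = 1) (hB : B = 0 ∨ B = 1)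
    (hA' : A' = 0 ∨ A' = 1) (hB' : B' = 0 ∨ B' = 1) (hg : |g| ≤ 1)
    (heq : (A - B) * (K - 2) + (1 - 2 * B) + (A' - B') = p * g) :
    A = A' ∧ A' ≠ B' := by
  have hg' : g = -1 ∨ g = 0 ∨ g = 1 := by rw [abs_le] at hg; omega
  rcases hA with rfl | rfl <;> rcases hB with rfl | rfl <;>
    rcases hA' with rfl | rfl <;> rcases hB' with rfl | rfl <;>
    rcases hg' with rfl | rfl | rfl <;> constructor <;> omega

lemma eq_zero_of_abs_natCast_mul_lt {p : ℕ} {x : ℤ} (hp : 0 < p) (h : |p * x| < p) : x = 0 := by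
  have := Int.eq_zero_of_abs_lt_dvd (dvd_mul_right (p : ℤ) x) h
  simpa [hp.ne'] using this

namespace runDefect

variable {p f : ℕ} [NeZero f] {k a b c : ZMod f → ℤ}
  (hp : 3 ≤ p) (ha : ∀ i, a i = 0 ∨ a i = 1) (hb : ∀ i, b i = 0 ∨ b i = 1)
  (hc : ∀ i, |c i| ≤ 1) (hz : ∀ i, runDefect k a b i = p * c i - c (i + 1))
include hp ha hb hc hz

/-- Each run of indices in `J₀` absorbs its carries: the carry out of its last index is `0`
since `p c_i = c_{i+1}`, and then it stays `0` backwards through the run since `p > 2`. -/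
lemma carry_eq_zero_of_eq_one (hnotone : ∃ i, k i ≠ 1) : ∀ i, k i = 1 → c i = 0 := by
  refine ZMod.induction_on_runs_succ (by simpa using hnotone) fun i hi hnext => ?_
  have hzi := hz i
  have hci1 := hc (i + 1)
  rw [abs_le] at hci1
  apply eq_zero_of_abs_natCast_mul_lt (p := p) (by omega)
  by_cases hi1 : k (i + 1) = 1
  · rw [hnext hi1, sub_zero] at hzi
    simp only [runDefect, hi, hi1, if_true] at hzi
    rw [← hzi, abs_lt]
    rcases ha i with h1 | h1 <;> rcases hb i with h2 | h2 <;>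
      rcases ha (i + 1) with h3 | h3 <;> rcases hb (i + 1) with h4 | h4 <;> omega
  · simp only [runDefect, hi, hi1, if_true, if_false] at hzi
    rw [abs_lt]
    omega

lemma sub_eq_sub_of_eq_one (hnotone : ∃ i, k i ≠ 1) {i : ZMod f} (hi : k i = 1)
    (hi1 : k (i + 1) = 1) : a (i + 1) - b (i + 1) = a i - b i := by
  have hzi := hz i
  simp only [runDefect, hi, hi1, if_true,
    carry_eq_zero_of_eq_one hp ha hb hc hz hnotone _ hi,
    carry_eq_zero_of_eq_one hp ha hb hc hz hnotone _ hi1] at hzi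
  omega

lemma eq_and_ne_of_ne_one (hk : ∀ i, 1 ≤ k i ∧ k i ≤ p) (hnotone : ∃ i, k i ≠ 1)
    (h21 : ∀ i, ¬(k i = 2 ∧ k (i + 1) = 1)) {i : ZMod f} (hi : k i ≠ 1)
    (hi1 : k (i + 1) = 1) : a i = a (i + 1) ∧ a (i + 1) ≠ b (i + 1) := by
  have hzi := hz i
  simp only [runDefect, hi, hi1, if_true, if_false,
    carry_eq_zero_of_eq_one hp ha hb hc hz hnotone _ hi1, sub_zero] at hzi
  have hk3 : 3 ≤ k i := by have := h21 i; have := hk i; omega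
  exact eq_and_ne_of_block_start hk3 (hk i).2 (ha i) (hb i)
    (ha (i + 1)) (hb (i + 1)) (hc i) hzi

/-- `a - b` is constant along each run and nonzero at its first index. -/
lemma ne_of_eq_one (hk : ∀ i, 1 ≤ k i ∧ k i ≤ p) (hnotone : ∃ i, k i ≠ 1)
    (h21 : ∀ i, ¬(k i = 2 ∧ k (i + 1) = 1)) : ∀ i, k i = 1 → a i ≠ b i := by
  refine ZMod.induction_on_runs_pred (by simpa using hnotone) fun i hi hprev => ?_
  by_cases hi' : k (i - 1) = 1
  · have := sub_eq_sub_of_eq_one hp ha hb hc hz hnotone hi' (by rwa [sub_add_cancel])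
    rw [sub_add_cancel] at this
    have := hprev hi'
    omega
  · simpa using (eq_and_ne_of_ne_one hp ha hb hc hz hk hnotone h21 hi'
      (by rwa [sub_add_cancel])).2

theorem eq_of_succ_eq_one (hk : ∀ i, 1 ≤ k i ∧ k i ≤ p) (hnotone : ∃ i, k i ≠ 1)
    (h21 : ∀ i, ¬(k i = 2 ∧ k (i + 1) = 1)) {i : ZMod f} (hi1 : k (i + 1) = 1) :
    a i = a (i + 1) := by
  by_cases hi : k i = 1
  · have := sub_eq_sub_of_eq_one hp ha hb hc hz hnotone hi hi1
    have := ne_of_eq_one hp ha hb hc hz hk hnotone h21 i hi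
    rcases ha i with h1 | h1 <;> rcases hb i with h2 | h2 <;>
      rcases ha (i + 1) with h3 | h3 <;> rcases hb (i + 1) with h4 | h4 <;> omega
  · exact (eq_and_ne_of_ne_one hp ha hb hc hz hk hnotone h21 hi hi1).1

end runDefect

section Conclusion

variable {p f : ℕ}

lemma Sig_runDefect_modEq_zero (hf : 1 ≤ f) {k : ZMod f → ℤ} {J' JTh : Set (ZMod f)}
    (hs : Sig p f (sW f (bp1 p f k) (zero2 f) J')
      ≡ Sig p f (sW f (bth1 p f k) (bth2 f k) JTh) [ZMOD (p : ℤ) ^ f - 1]) :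
    Sig p f (runDefect k (J'.indicator 1) (JTh.indicator 1)) ≡ 0 [ZMOD (p : ℤ) ^ f - 1] := by
  set w : ZMod f → ℤ := fun i => if k i = 1 then J'.indicator 1 i - JTh.indicator 1 i else 0
  have hsplit :
      Sig p f (sW f (bp1 p f k) (zero2 f) J') - Sig p f (sW f (bth1 p f k) (bth2 f k) JTh)
      = Sig p f (runDefect k (J'.indicator 1) (JTh.indicator 1)) + ((p : ℤ) ^ f - 1) * w 0 := by
    rw [← Sig_sub, ← Sig_mul_sub_shift hf, ← Sig_add]
    exact congrArg _ (funext (sW_bp1_sub_sW_bth1 p k J' JTh))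
  refine Int.modEq_zero_iff_dvd.mpr ?_
  rw [eq_sub_of_add_eq hsplit.symm]
  exact dvd_sub hs.symm.dvd (dvd_mul_right _ _)

lemma bp1_sub_b1 (k : ZMod f → ℤ) (i : ZMod f) :
    bp1 p f k i - b1 f k i
      = p * (if k i = 1 then 1 else 0) - (if k (i + 1) = 1 then 1 else 0) := by
  by_cases h1 : k i = 1 <;> by_cases h2 : k (i + 1) = 1 <;>
    simp only [bp1, b1, h1, h2, if_true, if_false] <;> ring

/-- `b′ − b = p·[i ∈ J₀] − [i + 1 ∈ J₀]` is a pure carry pattern, so weighting it by a vector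
that is constant on each block `{ν} ∪ T_ν` does not change `Σ` modulo `p ^ f - 1`. -/
lemma Sig_mul_b1_modEq (hf : 1 ≤ f) {k A : ZMod f → ℤ}
    (hA : ∀ i, k (i + 1) = 1 → A i = A (i + 1)) :
    Sig p f (fun i => A i * b1 f k i)
      ≡ Sig p f (fun i => A i * bp1 p f k i) [ZMOD (p : ℤ) ^ f - 1] := by
  set w : ZMod f → ℤ := fun i => if k i = 1 then A i else 0
  have hcarry :
      (fun i => A i * bp1 p f k i - A i * b1 f k i) = fun i => p * w i - w (i + 1) := by
    funext i
    rw [← mul_sub, bp1_sub_b1]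
    by_cases h2 : k (i + 1) = 1
    · simp only [w, h2, hA i h2, if_true]
      split_ifs <;> ring
    · simp only [w, h2, if_false]
      split_ifs <;> ring
  refine Int.modEq_iff_dvd.mpr ⟨w 0, ?_⟩
  rw [← Sig_sub, hcarry, Sig_mul_sub_shift hf]

lemma sW_zero2 (c : ZMod f → ℤ) (J : Set (ZMod f)) :
    sW f c (zero2 f) J = fun i => J.indicator 1 i * c i := by
  funext i
  by_cases h : i ∈ J <;> simp [sW, zero2, h]

lemma tW_zero2 (c : ZMod f → ℤ) (J : Set (ZMod f)) :
    tW f c (zero2 f) J = fun i => (1 - J.indicator 1 i) * c i := by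
  funext i
  by_cases h : i ∈ J <;> simp [tW, zero2, h]

end Conclusion

lemma Set.indicator_one_eq_zero_or_one {α : Type*} (s : Set α) (i : α) :
    s.indicator (1 : α → ℤ) i = 0 ∨ s.indicator (1 : α → ℤ) i = 1 := by
  by_cases h : i ∈ s <;> simp [h]

theorem stmt6_general (p f : ℕ) (hp : p.Prime) (hodd : Odd p) (hf : 1 ≤ f)
    (k : ZMod f → ℤ)
    (hk : ∀ i, 1 ≤ k i ∧ k i ≤ (p : ℤ))
    (hnotone : ∃ i, k i ≠ 1)
    (h21 : ∀ i, ¬(k i = 2 ∧ k (i + 1) = 1))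
    (J' JTh : Set (ZMod f))
    (hs : Int.ModEq ((p : ℤ) ^ f - 1)
      (Sig p f (sW f (bp1 p f k) (zero2 f) J'))
      (Sig p f (sW f (bth1 p f k) (bth2 f k) JTh))) :
    ∃ J : Set (ZMod f),
      (∀ i, k i ≠ 1 → (i ∈ J ↔ i ∈ J')) ∧
      Int.ModEq ((p : ℤ) ^ f - 1)
        (Sig p f (sW f (b1 f k) (zero2 f) J)) (Sig p f (sW f (bp1 p f k) (zero2 f) J')) ∧
      Int.ModEq ((p : ℤ) ^ f - 1)
        (Sig p f (tW f (b1 f k) (zero2 f) J)) (Sig p f (tW f (bp1 p f k) (zero2 f) J')) := by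
  have : NeZero f := ⟨by omega⟩
  have hp3 : 3 ≤ p := by
    have := hp.two_le
    have : p ≠ 2 := by rintro rfl; exact (by decide : ¬ Odd 2) hodd
    omega
  obtain ⟨c, hc, hz⟩ := exists_carries_of_Sig_modEq_zero hp3 hf
    (abs_runDefect_le (by omega) hk J'.indicator_one_eq_zero_or_one
      JTh.indicator_one_eq_zero_or_one) (Sig_runDefect_modEq_zero hf hs)
  have hA : ∀ i, k (i + 1) = 1 → J'.indicator 1 i = J'.indicator (1 : ZMod f → ℤ) (i + 1) :=
    fun i => runDefect.eq_of_succ_eq_one hp3 J'.indicator_one_eq_zero_or_one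
      JTh.indicator_one_eq_zero_or_one hc hz hk hnotone h21
  refine ⟨J', fun _ _ => Iff.rfl, ?_, ?_⟩
  · rw [sW_zero2, sW_zero2]
    exact Sig_mul_b1_modEq hf hA
  · rw [tW_zero2, tW_zero2]
    exact Sig_mul_b1_modEq hf fun i hi => by rw [hA i hi]

/-- Proposition 5.9 of the paper: if the `J′`- and `J^Θ`-congruences hold, then there is a
subset `J` agreeing with `J′` outside `J₀` such that the irregular-weight congruences hold. -/
theorem stmt6 (p f : ℕ) (hp : p.Prime) (hodd : Odd p) (hf : 1 ≤ f)
    (k : ZMod f → ℤ)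
    (hk : ∀ i, 1 ≤ k i ∧ k i ≤ (p : ℤ))
    (hone : ∃ i, k i = 1) (hnotone : ∃ i, k i ≠ 1)
    (h21 : ∀ i, ¬(k i = 2 ∧ k (i + 1) = 1))
    (J' JTh : Set (ZMod f))
    (hs : Int.ModEq ((p : ℤ) ^ f - 1)
      (Sig p f (sW f (bp1 p f k) (zero2 f) J'))
      (Sig p f (sW f (bth1 p f k) (bth2 f k) JTh)))
    (ht : Int.ModEq ((p : ℤ) ^ f - 1)
      (Sig p f (tW f (bp1 p f k) (zero2 f) J'))
      (Sig p f (tW f (bth1 p f k) (bth2 f k) JTh))) :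
    ∃ J : Set (ZMod f),
      (∀ i, k i ≠ 1 → (i ∈ J ↔ i ∈ J')) ∧
      Int.ModEq ((p : ℤ) ^ f - 1)
        (Sig p f (sW f (b1 f k) (zero2 f) J)) (Sig p f (sW f (bp1 p f k) (zero2 f) J')) ∧
      Int.ModEq ((p : ℤ) ^ f - 1)
        (Sig p f (tW f (b1 f k) (zero2 f) J)) (Sig p f (tW f (bp1 p f k) (zero2 f) J')) :=
  stmt6_general p f hp hodd hf k hk hnotone h21 J' JTh hs
end
end

section
/- The tuple (k_i − 1)_{i ∈ ℤ/fℤ} does not lie in the set 𝒫′. (This is the combinatorial content of the assertion that a crystalline lift of the irregular weight (k,0) never falls into the exceptional case of the structure theorem for reductions of Kisin modules.) -/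
open scoped Classical
noncomputable section

/-- Lemma A.10 of the paper: the tuple `(k_i − 1)_i` does not lie in `𝒫′`. -/
theorem stmt9 (p f : ℕ) (hp : p.Prime) (hodd : Odd p) (hf : 1 ≤ f)
    (k : ZMod f → ℤ)
    (hk : ∀ i, 1 ≤ k i ∧ k i ≤ (p : ℤ))
    (hone : ∃ i, k i = 1) (hnotone : ∃ i, k i ≠ 1)
    (h21 : ∀ i, ¬(k i = 2 ∧ k (i + 1) = 1)) :
    ¬ memP' p f (fun i => k i - 1) := by
  rintro ⟨-, -, -, h4⟩
  obtain ⟨i0, hi0⟩ := hone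
  have h0 : (fun i => k i - 1) i0 = 0 := by simp [hi0]
  rcases h4 i0 h0 with hall | ⟨s, t, -, -, -, -, -, hp'⟩
  · obtain ⟨j, hj⟩ := hnotone
    have := hall j
    simp only at this
    exact hj (by linarith)
  · have := (hk (i0 - (t : ZMod f))).2
    simp only at hp'
    linarith [hp.two_le, (by exact_mod_cast hp.two_le : (2:ℤ) ≤ p)]
end
end

section
/- Let r′_i = b′_{i,1} − b′_{i,2} = b′_{i,1}. Suppose J′ ⊆ ℤ/fℤ is such that for every μ ∈ M̃, either μ ∈ J′ and T_μ ⊆ J′, or μ ∉ J′ and T_μ ∩ J′ = ∅. Then the pair (r′, J′) is not exceptional, i.e. it is not the case that r′ ∈ 𝒫′, every i with r′_i ∈ {p−1, p} lies in J′, and no i with r′_i = 1 lies in J′. -/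
open scoped Classical
noncomputable section

/-- Lemma A.11 of the paper: under the block condition on `J′`, the pair `(r′, J′)` with
`r′_i = b′_{i,1}` is not exceptional. -/
theorem stmt10 (p f : ℕ) (hp : p.Prime) (hodd : Odd p) (hf : 1 ≤ f)
    (k : ZMod f → ℤ)
    (hk : ∀ i, 1 ≤ k i ∧ k i ≤ (p : ℤ))
    (hone : ∃ i, k i = 1) (hnotone : ∃ i, k i ≠ 1)
    (h21 : ∀ i, ¬(k i = 2 ∧ k (i + 1) = 1))
    (J' : Set (ZMod f))
    (hJ' : ∀ μ, (k μ ≠ 1 ∧ k (μ + 1) = 1) →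
      (μ ∈ J' ∧ Trun f k μ ⊆ J') ∨ (μ ∉ J' ∧ Trun f k μ ∩ J' = ∅)) :
    ¬ Exceptional p f (bp1 p f k) J' := by
  intro hE
  obtain ⟨⟨h0, h1, h2, h3⟩, hPJ, h1J⟩ := hE
  haveI : NeZero f := ⟨by omega⟩
  obtain ⟨i0, hi0⟩ := hone
  obtain ⟨j0, hj0⟩ := hnotone
  -- find a transition index μ with k μ ≠ 1 and k (μ+1) = 1
  have hex : ∃ n : ℕ, 1 ≤ n ∧ k (j0 + (n : ZMod f)) = 1 := by
    refine ⟨(i0 - j0).val, ?_, ?_⟩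
    · rcases Nat.eq_zero_or_pos (i0 - j0).val with h | h
      · exfalso
        have h' : i0 - j0 = 0 := (ZMod.val_eq_zero _).mp h
        rw [sub_eq_zero] at h'
        exact hj0 (h' ▸ hi0)
      · exact h
    · have : ((i0 - j0).val : ZMod f) = i0 - j0 := ZMod.natCast_val _ |>.trans (ZMod.cast_id _ _)
      rw [this]
      simpa using hi0
  set N := Nat.find hex with hNdef
  obtain ⟨hN1, hNk⟩ := Nat.find_spec hex
  obtain ⟨m, hm⟩ : ∃ m, N = m + 1 := ⟨N - 1, (Nat.succ_pred_eq_of_pos hN1).symm⟩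
  set μ : ZMod f := j0 + ((m : ℕ) : ZMod f) with hμdef
  have hμ1 : k (μ + 1) = 1 := by
    have : μ + 1 = j0 + (N : ZMod f) := by
      rw [hμdef, hm]; push_cast; ring
    rw [this]; exact hNk
  have hμne : k μ ≠ 1 := by
    rcases Nat.eq_zero_or_pos m with h | h
    · have : μ = j0 := by rw [hμdef, h]; simp
      rw [this]; exact hj0
    · have hmin := Nat.find_min hex (m := m) (by omega)
      intro hc
      exact hmin ⟨h, hc⟩
  -- main argument
  have hkμ := hk μ
  have hkμ3 : 3 ≤ k μ := by
    have h2 := h21 μ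
    have : k μ ≠ 2 := fun hc => h2 ⟨hc, hμ1⟩
    have := hkμ.1
    omega
  have hp3 : 3 ≤ p := by
    have := hp.two_le
    have := Nat.odd_iff.mp hodd
    omega
  have hp3' : (3 : ℤ) ≤ (p : ℤ) := by exact_mod_cast hp3
  have hrμ : bp1 p f k μ = k μ - 2 := by
    simp [bp1, hμne, hμ1]
  have hrμ1 : bp1 p f k μ = 1 := by
    have hle := hkμ.2
    rcases h0 μ with h | h | h | h
    · rw [hrμ] at h; omega
    · exact h
    · rw [hrμ] at h; omega
    · rw [hrμ] at h; omega
  have hμJ : μ ∉ J' := h1J μ hrμ1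
  rcases hJ' μ ⟨hμne, hμ1⟩ with ⟨hin, _⟩ | ⟨_, hT⟩
  · exact hμJ hin
  · have hmem : μ + 1 ∈ Trun f k μ := by
      refine ⟨1, le_refl 1, by norm_num, ?_⟩
      intro j hj1 hj2
      have : j = 1 := le_antisymm hj2 hj1
      subst this
      simpa using hμ1
    have hrsucc : bp1 p f k (μ + 1) = (p : ℤ) - 1 ∨ bp1 p f k (μ + 1) = (p : ℤ) := by
      by_cases h : k (μ + 1 + 1) = 1
      · left; simp [bp1, hμ1, h]
      · right; simp [bp1, hμ1, h]
    have hsuccJ : μ + 1 ∈ J' := hPJ (μ + 1) hrsucc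
    have : μ + 1 ∈ Trun f k μ ∩ J' := ⟨hmem, hsuccJ⟩
    rw [hT] at this
    exact this
end
end

section
/- Let μ ∈ M̃ and let r^μ_i = b^μ_{i,1} − b^μ_{i,2} (so r^μ_μ = k_μ and r^μ_i = b′_{i,1} for i ≠ μ). Suppose J^μ ⊆ ℤ/fℤ is such that either μ ∈ J^μ and T_μ ∩ J^μ = ∅, or μ ∉ J^μ and T_μ ⊆ J^μ. Then the pair (r^μ, J^μ) is not exceptional, i.e. it is not the case that r^μ ∈ 𝒫′, every i with r^μ_i ∈ {p−1, p} lies in J^μ, and no i with r^μ_i = 1 lies in J^μ. -/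
open scoped Classical
noncomputable section

/-- Lemma A.12 of the paper: under the block condition on `J^μ`, the pair `(r^μ, J^μ)` with
`r^μ_i = b^μ_{i,1} − b^μ_{i,2}` is not exceptional. -/
theorem stmt11 (p f : ℕ) (hp : p.Prime) (hodd : Odd p) (hf : 1 ≤ f)
    (k : ZMod f → ℤ)
    (hk : ∀ i, 1 ≤ k i ∧ k i ≤ (p : ℤ))
    (hone : ∃ i, k i = 1) (hnotone : ∃ i, k i ≠ 1)
    (h21 : ∀ i, ¬(k i = 2 ∧ k (i + 1) = 1))
    (μ : ZMod f) (hμ : k μ ≠ 1 ∧ k (μ + 1) = 1)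
    (Jμ : Set (ZMod f))
    (hJμ : (μ ∈ Jμ ∧ Trun f k μ ∩ Jμ = ∅) ∨ (μ ∉ Jμ ∧ Trun f k μ ⊆ Jμ)) :
    ¬ Exceptional p f (fun i => bmu1 p f k μ i - bmu2 f μ i) Jμ := by
  rintro ⟨hP, hJ1, hJ2⟩
  have hμne : μ + 1 ≠ μ := fun h => hμ.1 (h ▸ hμ.2)
  have hrμ : bmu1 p f k μ μ - bmu2 f μ μ = k μ := by
    simp [bmu1, bmu2]
  have hkμ3 : 3 ≤ k μ := by
    have h1 := (hk μ).1
    have h2 := h21 μ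
    have h3 := hμ.1
    have h4 := hμ.2
    omega
  have hrμ4 := hP.1 μ
  simp only [hrμ] at hrμ4
  have hμin : μ ∈ Jμ := by
    apply hJ1 μ
    simp only [hrμ]
    rcases hrμ4 with h | h | h | h
    · omega
    · omega
    · exact Or.inl h
    · exact Or.inr h
  rcases hJμ with ⟨_, hempty⟩ | ⟨hnin, _⟩
  · have hT : μ + 1 ∈ Trun f k μ := by
      refine ⟨1, le_refl 1, by norm_num, ?_⟩
      intro j hj1 hj2
      have : j = 1 := le_antisymm hj2 hj1
      subst this
      simpa using hμ.2
    have hr1 : bmu1 p f k μ (μ + 1) - bmu2 f μ (μ + 1) = (p : ℤ) - 1 ∨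
        bmu1 p f k μ (μ + 1) - bmu2 f μ (μ + 1) = (p : ℤ) := by
      by_cases h2 : k (μ + 1 + 1) = 1
      · left; simp [bmu1, bmu2, bp1, hμne, hμ.2, h2]
      · right; simp [bmu1, bmu2, bp1, hμne, hμ.2, h2]
    have hJin : μ + 1 ∈ Jμ := hJ1 _ hr1
    have : μ + 1 ∈ Trun f k μ ∩ Jμ := ⟨hT, hJin⟩
    rw [hempty] at this
    exact this
  · exact hnin hμin
end
end
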